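/- arXiv:1708.00639 — 11 statements merged into one kernel-verified Lean document; each statement's English description precedes it below -/
import Mathlib

section
/- If both aw and wb are periodic (i.e., aw has period at most |aw|/2 and wb has period at most |wb|/2), then the smallest period of aw equals the smallest period of wb. -/
/-- `p` is a period of `w`: `p ≥ 1` and `w[i] = w[i+p]` for all valid indices. -/
def IsPeriod {α : Type*} (w : List α) (p : ℕ) : Prop :=
  1 ≤ p ∧ ∀ i, i + p < w.length → w[i]? = w[i + p]?

/-- The smallest period of `w`. -/
noncomputable def minPeriod {α : Type*} (w : List α) : ℕ :=
  sInf {p | IsPeriod w p}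

/-- `w` is periodic if its smallest period is at most `|w|/2`. -/
def Periodic {α : Type*} (w : List α) : Prop :=
  2 * minPeriod w ≤ w.length

/-- `w` is aperiodic if its smallest period exceeds `|w|/2`. -/
def Aperiodic {α : Type*} (w : List α) : Prop :=
  w.length < 2 * minPeriod w

/-- Cyclic rotation of `w` by `i`. -/
def rot {α : Type*} (w : List α) (i : ℕ) : List α :=
  w.drop i ++ w.take i

/-- A square is a nonempty word of the form `u ++ u`. -/
def IsSq {α : Type*} (s : List α) : Prop :=
  ∃ u : List α, u ≠ [] ∧ s = u ++ u

/-- `p`-fold concatenation of the word `y`. -/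
def listPow {α : Type*} (y : List α) (p : ℕ) : List α :=
  (List.replicate p y).flatten

/-- A word is primitive if it is not a `p`-th power with `p ≥ 2`. -/
def Primitive {α : Type*} (w : List α) : Prop :=
  ¬ ∃ (y : List α) (p : ℕ), 2 ≤ p ∧ w = listPow y p

/-- The set of distinct squares occurring in the circular word `(w)`. -/
def cyclicSquares {α : Type*} (w : List α) : Set (List α) :=
  {s | IsSq s ∧ ∃ i < w.length, s <:+: rot w i}

/-- `s` occurs in `x` starting at (0-indexed) position `i`. -/
def occursAt {α : Type*} (s x : List α) (i : ℕ) : Prop :=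
  (x.drop i).take s.length = s

/-- The rightmost occurrence of `s` in `x` starts at (0-indexed) position `i`. -/
def rightmostStartsAt {α : Type*} (s x : List α) (i : ℕ) : Prop :=
  occursAt s x i ∧ ∀ j, occursAt s x j → j ≤ i

/-- `w[i..j]` with 1-indexed inclusive bounds. -/
def oneSlice {α : Type*} (w : List α) (i j : ℕ) : List α :=
  (w.drop (i - 1)).take (j - i + 1)

/-- The letters `a` and `b` of the two-letter alphabet. -/
def la : Bool := false
def lb : Bool := true

/-- The word `(ba)^m`. -/
def baPow (m : ℕ) : List Bool := (List.replicate m [lb, la]).flatten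

/-- The word `(ab)^m`. -/
def abPow (m : ℕ) : List Bool := (List.replicate m [la, lb]).flatten

/-- `x_k = a (ba)^{k+1} a (ba)^{k+2}`. -/
def xWord (k : ℕ) : List Bool := [la] ++ baPow (k + 1) ++ [la] ++ baPow (k + 2)

/-- `f_k = a(ba)^{k+1} a(ba)^{k+2} a(ba)^{k+1} a(ba)^{k+2}`. -/
def fWord (k : ℕ) : List Bool := xWord k ++ xWord k

/-!
Let `p` and `q` be the smallest periods of `aw` and `wb`, and suppose `aw` is periodic but
`q < p`. Both are periods of `w` and `p + q < 2p ≤ |w| + 1`, so by Fine and Wilf `d = gcd p q` is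
a period of `w`, hence of its suffix `drop p (aw)`. As `2p ≤ |aw|` and `d ∣ p`, the period `d`
propagates from that suffix to all of `aw`, so `p ≤ d ≤ q`, a contradiction. Thus `p ≤ q` as soon
as `aw` is periodic; the other inequality is the same statement for the reversed words.
-/

namespace List

variable {α : Type*}

theorem HasPeriod.reverse {w : List α} {p : ℕ} (hw : w.HasPeriod p) : w.reverse.HasPeriod p := by
  rw [hasPeriod_iff_getElem?] at hw ⊢
  intro i hi
  rw [length_reverse] at hi
  rw [getElem?_reverse (by omega), getElem?_reverse (by omega)]
  have := hw (w.length - 1 - i - p) (by omega)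
  rw [show w.length - 1 - i - p + p = w.length - 1 - i by omega] at this
  rw [show w.length - 1 - (i + p) = w.length - 1 - i - p by omega, this]

theorem hasPeriod_reverse_iff {w : List α} {p : ℕ} : w.reverse.HasPeriod p ↔ w.HasPeriod p :=
  ⟨fun h => w.reverse_reverse ▸ h.reverse, HasPeriod.reverse⟩

/-- A word with period `p` and length at least `2p` is its suffix `drop p w` extended to the left
by the first `p` letters of that suffix; such an extension keeps every period dividing `p`. -/
theorem HasPeriod.of_hasPeriod_drop {w : List α} {p d : ℕ} (hp : w.HasPeriod p)
    (hlen : 2 * p ≤ w.length) (hd : (w.drop p).HasPeriod d) (hdp : d ∣ p) : w.HasPeriod d := by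
  have htake : (w.drop p).take p = w.take p := by
    obtain ⟨z, hz⟩ := hp.drop_prefix
    rw [← take_append_of_le_length (l₂ := z) (by simp; omega), hz]
  have := hd.take_append d p (w.drop p) hdp (by simp; omega)
  rwa [htake, take_append_drop] at this

end List

open List

section MinPeriod

variable {α : Type*}

theorem isPeriod_iff_hasPeriod {w : List α} {p : ℕ} : IsPeriod w p ↔ 1 ≤ p ∧ w.HasPeriod p := by
  rw [hasPeriod_iff_getElem?]
  exact and_congr_right fun _ => forall_congr' fun i =>
    ⟨fun h hi => h (by omega), fun h hi => h (by omega)⟩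

theorem minPeriod_isPeriod (w : List α) : IsPeriod w (minPeriod w) :=
  Nat.sInf_mem (s := {p | IsPeriod w p})
    ⟨w.length + 1, isPeriod_iff_hasPeriod.2 ⟨by omega, hasPeriod_of_length_le _ _ (by omega)⟩⟩

theorem minPeriod_le {w : List α} {p : ℕ} (hp : IsPeriod w p) : minPeriod w ≤ p :=
  Nat.sInf_le hp

theorem minPeriod_reverse (w : List α) : minPeriod w.reverse = minPeriod w := by
  simp only [minPeriod, isPeriod_iff_hasPeriod, hasPeriod_reverse_iff]

theorem periodic_reverse_iff {w : List α} : Periodic w.reverse ↔ Periodic w := by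
  rw [Periodic, Periodic, minPeriod_reverse, length_reverse]

theorem minPeriod_cons_le_minPeriod_append {w : List α} {a b : α}
    (ha : Periodic (a :: w)) : minPeriod (a :: w) ≤ minPeriod (w ++ [b]) := by
  obtain ⟨hp1, hp⟩ := isPeriod_iff_hasPeriod.1 (minPeriod_isPeriod (a :: w))
  obtain ⟨hq1, hq⟩ := isPeriod_iff_hasPeriod.1 (minPeriod_isPeriod (w ++ [b]))
  set p := minPeriod (a :: w)
  set q := minPeriod (w ++ [b])
  by_contra! hqp
  have hpw : w.HasPeriod p := hp.infix (suffix_cons a w).isInfix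
  have hqw : w.HasPeriod q := hq.infix (prefix_append w [b]).isInfix
  have hdw : w.HasPeriod (p.gcd q) := hpw.gcd hqw (by rw [Periodic, length_cons] at ha; omega)
  have hdrop : ((a :: w).drop p).HasPeriod (p.gcd q) := by
    rw [← Nat.sub_add_cancel hp1, drop_succ_cons, Nat.sub_add_cancel hp1]
    exact hdw.infix (drop_suffix _ w).isInfix
  have hd : (a :: w).HasPeriod (p.gcd q) :=
    hp.of_hasPeriod_drop ha hdrop (Nat.gcd_dvd_left p q)
  have hpd : p ≤ p.gcd q :=
    minPeriod_le (isPeriod_iff_hasPeriod.2 ⟨Nat.gcd_pos_of_pos_left q hp1, hd⟩)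
  have hdq : p.gcd q ≤ q := Nat.gcd_le_right p hq1
  omega

end MinPeriod

/-- If both `aw` and `wb` are periodic, then their smallest periods are equal. -/
theorem stmt0 {α : Type*} (w : List α) (a b : α)
    (h1 : Periodic (a :: w)) (h2 : Periodic (w ++ [b])) :
    minPeriod (a :: w) = minPeriod (w ++ [b]) := by
  refine le_antisymm (minPeriod_cons_le_minPeriod_append h1) ?_
  have h2' : Periodic (b :: w.reverse) := by rwa [← reverse_concat, periodic_reverse_iff]
  have := minPeriod_cons_le_minPeriod_append (b := a) h2'
  rwa [← reverse_concat, ← reverse_cons, minPeriod_reverse, minPeriod_reverse] at this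
end

section
/- If p and q are periods of a word w and p + q ≤ |w| + gcd(p, q), then gcd(p, q) is also a period of w. -/
/-! Fine–Wilf by Euclid's algorithm: if `p < q` are periods of `w`, then the prefix of length
`|w| - p` has periods `p` and `q - p`, so by induction it has period `gcd p q`; and a period of
a long enough prefix that divides a period of `w` is a period of all of `w`. -/

namespace IsPeriod

variable {α : Type*} {w : List α} {p q d m : ℕ}

theorem take (hp : IsPeriod w p) (m : ℕ) : IsPeriod (w.take m) p := by
  refine ⟨hp.1, fun i hi => ?_⟩
  rw [List.length_take] at hi
  rw [List.getElem?_take_of_lt (by omega), List.getElem?_take_of_lt (by omega)]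
  exact hp.2 i (by omega)

theorem sub_take (hp : IsPeriod w p) (hq : IsPeriod w q) (hpq : p < q) :
    IsPeriod (w.take (w.length - p)) (q - p) := by
  refine ⟨by omega, fun i hi => ?_⟩
  rw [List.length_take] at hi
  rw [List.getElem?_take_of_lt (by omega), List.getElem?_take_of_lt (by omega),
    hq.2 i (by omega), hp.2 (i + (q - p)) (by omega)]
  congr 1
  omega

theorem getElem?_eq_getElem?_mod (hd : IsPeriod (w.take m) d) (hp : IsPeriod w p) (hdp : d ∣ p)
    (hpm : p ≤ m) {x : ℕ} (hx : x < w.length) : w[x]? = w[x % d]? := by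
  have hd0 := hd.1
  have hp0 := hp.1
  induction x using Nat.strong_induction_on with
  | _ x ih =>
    rcases lt_or_ge x d with hxd | hxd
    · rw [Nat.mod_eq_of_lt hxd]
    rcases lt_or_ge x m with hxm | hxm
    · have hstep : w[x - d]? = w[x]? := by
        have := hd.2 (x - d) (by rw [List.length_take]; omega)
        rwa [List.getElem?_take_of_lt (by omega), List.getElem?_take_of_lt (by omega),
          Nat.sub_add_cancel hxd] at this
      rw [← hstep, ih (x - d) (by omega) (by omega), Nat.mod_eq_sub_mod hxd]
    · have hstep : w[x - p]? = w[x]? := by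
        rw [hp.2 (x - p) (by omega), Nat.sub_add_cancel (by omega)]
      obtain ⟨k, rfl⟩ := hdp
      rw [← hstep, ih (x - d * k) (by omega) (by omega), Nat.sub_mul_mod (by omega)]

theorem of_take_of_dvd (hd : IsPeriod (w.take m) d) (hp : IsPeriod w p) (hdp : d ∣ p)
    (hpm : p ≤ m) : IsPeriod w d := by
  refine ⟨hd.1, fun i hi => ?_⟩
  rw [hd.getElem?_eq_getElem?_mod hp hdp hpm (by omega),
    hd.getElem?_eq_getElem?_mod hp hdp hpm hi, Nat.add_mod_right]

theorem gcd (hp : IsPeriod w p) (hq : IsPeriod w q) (h : p + q ≤ w.length + Nat.gcd p q) :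
    IsPeriod w (Nat.gcd p q) := by
  induction hn : p + q using Nat.strong_induction_on generalizing w p q with
  | _ n ih =>
  wlog hpq : p ≤ q generalizing p q
  · rw [Nat.gcd_comm] at h ⊢
    exact this hq hp (by omega) (by omega) (by omega)
  rcases hpq.eq_or_lt with rfl | hlt
  · rwa [Nat.gcd_self]
  have hd : (q - p).gcd p = p.gcd q := by rw [Nat.gcd_comm, Nat.gcd_sub_self_right hpq]
  have hdq : p.gcd q ≤ q - p := Nat.le_of_dvd (by omega) (hd ▸ Nat.gcd_dvd_left _ _)
  have hprefix : IsPeriod (w.take (w.length - p)) (p.gcd q) := by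
    rw [← hd, Nat.gcd_comm]
    refine ih q (by have := hp.1; omega) (hp.take _) (hp.sub_take hq hlt) ?_ (by omega)
    rw [List.length_take, Nat.gcd_comm, hd]
    omega
  exact hprefix.of_take_of_dvd hp (Nat.gcd_dvd_left p q) (by omega)

end IsPeriod

/-- Fine–Wilf periodicity lemma. -/
theorem stmt1 {α : Type*} (w : List α) (p q : ℕ)
    (hp : IsPeriod w p) (hq : IsPeriod w q)
    (h : p + q ≤ w.length + Nat.gcd p q) :
    IsPeriod w (Nat.gcd p q) :=
  hp.gcd hq h
end

section
/- For every k ≥ 0, the word x_k = a(ba)^{k+1} a(ba)^{k+2} over the alphabet {a, b} is primitive, i.e., x_k cannot be written as y^p for any word y and integer p ≥ 2. -/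
theorem count_listPow {α : Type*} [BEq α] (a : α) (y : List α) (p : ℕ) :
    (listPow y p).count a = p * y.count a := by
  simp [listPow, List.count_flatten]

theorem primitive_of_coprime_count {α : Type*} [BEq α] {w : List α} {a b : α}
    (h : Nat.Coprime (w.count a) (w.count b)) : Primitive w := by
  rintro ⟨y, p, hp, rfl⟩
  rw [count_listPow, count_listPow] at h
  have hpp : Nat.Coprime p p :=
    (h.coprime_dvd_left (dvd_mul_right p _)).coprime_dvd_right (dvd_mul_right p _)
  have := (Nat.coprime_self p).mp hpp
  omega

theorem count_baPow (c : Bool) (m : ℕ) : (baPow m).count c = m * [lb, la].count c := by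
  simp [baPow, List.count_flatten]

theorem count_la_xWord (k : ℕ) : (xWord k).count la = 2 * k + 5 := by
  simp [xWord, count_baPow, la, lb]
  ring

theorem count_lb_xWord (k : ℕ) : (xWord k).count lb = 2 * k + 3 := by
  simp [xWord, count_baPow, la, lb]
  ring

/-- `x_k = a(ba)^{k+1} a(ba)^{k+2}` is primitive for every `k ≥ 0`. -/
theorem stmt2 (k : ℕ) : Primitive (xWord k) := by
  apply primitive_of_coprime_count (a := la) (b := lb)
  rw [count_la_xWord, count_lb_xWord, show 2 * k + 5 = 2 + (2 * k + 3) by ring,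
    Nat.coprime_add_self_left, Nat.coprime_two_left]
  exact odd_two_mul_add_one (k + 1)
end

section
/- If two cyclic rotations of a word w are equal, say w^{(i)} = w^{(j)} with 0 ≤ i < j < |w|, then gcd(|w|, j - i) is a period of w. -/
/-!
The shifts `k` with `w.rotate k = w` are exactly the periodic points of the one-step rotation,
so they are closed under `gcd`. Since `w^{(i)} = w^{(j)}` gives the shift `j - i` and `|w|` is a
shift anyway, `gcd(|w|, j - i)` is a shift, and a shift `p ≥ 1` of `w` is a period of `w`.
-/

namespace List

variable {α : Type*}

theorem rotate_eq_iterate_rotate_one (l : List α) (k : ℕ) :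
    l.rotate k = (fun l : List α => l.rotate 1)^[k] l := by
  induction k with
  | zero => exact rotate_zero l
  | succ k ih => rw [Function.iterate_succ_apply', ← ih, rotate_rotate]

theorem isPeriodicPt_rotate_one_iff {l : List α} {k : ℕ} :
    Function.IsPeriodicPt (fun l : List α => l.rotate 1) k l ↔ l.rotate k = l := by
  rw [Function.IsPeriodicPt, Function.IsFixedPt, rotate_eq_iterate_rotate_one]

theorem rotate_sub_eq_self_of_rotate_eq {l : List α} {i j : ℕ} (hij : i ≤ j)
    (h : l.rotate i = l.rotate j) : l.rotate (j - i) = l := by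
  rwa [← Nat.sub_add_cancel hij, ← rotate_rotate, rotate_eq_rotate, eq_comm] at h

theorem rotate_gcd_eq_self {l : List α} {m n : ℕ} (hm : l.rotate m = l) (hn : l.rotate n = l) :
    l.rotate (m.gcd n) = l := by
  rw [← isPeriodicPt_rotate_one_iff] at *
  exact hm.gcd hn

end List

theorem rot_eq_rotate {α : Type*} {w : List α} {i : ℕ} (hi : i ≤ w.length) :
    rot w i = w.rotate i :=
  (List.rotate_eq_drop_append_take hi).symm

theorem isPeriod_of_rotate_eq_self {α : Type*} {w : List α} {p : ℕ} (hp : 1 ≤ p)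
    (h : w.rotate p = w) :
    IsPeriod w p := by
  refine ⟨hp, fun k hk => ?_⟩
  conv_lhs => rw [← h]
  rw [List.getElem?_rotate (by omega), Nat.mod_eq_of_lt hk]

/-- If two cyclic rotations of `w` coincide, `gcd(|w|, j - i)` is a period of `w`. -/
theorem stmt4 {α : Type*} (w : List α) (i j : ℕ)
    (hij : i < j) (hj : j < w.length) (h : rot w i = rot w j) :
    IsPeriod w (Nat.gcd w.length (j - i)) := by
  rw [rot_eq_rotate (by omega), rot_eq_rotate hj.le] at h
  refine isPeriod_of_rotate_eq_self (Nat.gcd_pos_of_pos_right _ (by omega)) ?_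
  exact List.rotate_gcd_eq_self w.rotate_length (List.rotate_sub_eq_self_of_rotate_eq hij.le h)
end

section
/- For every k ≥ 0, the number of distinct square words occurring as factors of the word a(ba)^{k+2} over {a,b} is exactly 2·⌊(k+2)/2⌋; namely, the squares are exactly (ab)^i(ab)^i and (ba)^i(ba)^i for 1 ≤ i ≤ ⌊(k+2)/2⌋. -/
/-!
With `a = false` and `b = true`, the word `a(ba)^m` is the prefix of length `2m + 1` of the
parity sequence `Nat.bodd 0, Nat.bodd 1, …`, so its factors are the windows
`bodd t, …, bodd (t + n - 1)`. Such a window `uu` is a square only if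
`bodd t = bodd (t + |u|)`, i.e. `|u|` is even, and then it is `(ab)^{2i}` or `(ba)^{2i}`
according to the parity of `t`. The `(ab)`-squares and `(ba)`-squares differ in their first
letter, and squares of the same kind differ in length.
-/

section RangeWindows

variable {α : Type*} (f : ℕ → α)

theorem map_range'_add (t m n : ℕ) :
    (List.range' t (m + n)).map f = (List.range' t m).map f ++ (List.range' (t + m) n).map f := by
  rw [← List.map_append, List.range'_append_1, Nat.add_comm m n]

theorem infix_map_range'_iff (s : List α) (n : ℕ) :
    s <:+: (List.range' 0 n).map f ↔
      ∃ t, t + s.length ≤ n ∧ s = (List.range' t s.length).map f := by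
  constructor
  · rintro ⟨p, q, hpq⟩
    have hn : n = p.length + (s.length + q.length) := by
      simpa [add_assoc] using (congrArg List.length hpq).symm
    rw [hn, map_range'_add, map_range'_add, ← List.append_assoc] at hpq
    obtain ⟨hps, -⟩ := List.append_inj hpq (by simp)
    obtain ⟨-, hs⟩ := List.append_inj hps (by simp)
    exact ⟨p.length, by omega, by simpa using hs⟩
  · rintro ⟨t, ht, hs⟩
    obtain ⟨r, rfl⟩ : ∃ r, n = t + s.length + r := ⟨n - t - s.length, by omega⟩
    refine ⟨(List.range' 0 t).map f, (List.range' (t + s.length) r).map f, ?_⟩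
    rw [map_range'_add, map_range'_add, Nat.zero_add, Nat.zero_add, ← hs]

end RangeWindows

theorem Nat.bodd_eq_bodd_iff {m n : ℕ} : m.bodd = n.bodd ↔ m % 2 = n % 2 := by
  rw [Nat.mod_two_of_bodd, Nat.mod_two_of_bodd]
  cases m.bodd <;> cases n.bodd <;> simp

theorem map_bodd_range'_congr {t t' : ℕ} (n : ℕ) (h : t % 2 = t' % 2) :
    (List.range' t n).map Nat.bodd = (List.range' t' n).map Nat.bodd := by
  simp only [List.range'_eq_map_range, List.map_map]
  refine List.map_congr_left fun i _ => Nat.bodd_eq_bodd_iff.2 ?_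
  dsimp only
  omega

theorem abPow_add (i j : ℕ) : abPow (i + j) = abPow i ++ abPow j := by
  simp only [abPow, List.replicate_add, List.flatten_append]

theorem baPow_add (i j : ℕ) : baPow (i + j) = baPow i ++ baPow j := by
  simp only [baPow, List.replicate_add, List.flatten_append]

theorem abPow_eq_map_bodd (i : ℕ) : abPow i = (List.range' 0 (2 * i)).map Nat.bodd := by
  induction i with
  | zero => rfl
  | succ i ih =>
    rw [abPow_add, ih, Nat.mul_succ, map_range'_add]
    simp [abPow, la, lb, List.range', Nat.bodd_mul]

theorem baPow_eq_map_bodd (i : ℕ) : baPow i = (List.range' 1 (2 * i)).map Nat.bodd := by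
  induction i with
  | zero => rfl
  | succ i ih =>
    rw [baPow_add, ih, Nat.mul_succ, map_range'_add]
    simp [baPow, la, lb, List.range', Nat.bodd_add, Nat.bodd_mul]

theorem a_append_baPow_eq_map_bodd (m : ℕ) :
    [la] ++ baPow m = (List.range' 0 (2 * m + 1)).map Nat.bodd := by
  rw [baPow_eq_map_bodd, Nat.add_comm, map_range'_add]
  rfl

theorem abPow_append_self (i : ℕ) :
    abPow i ++ abPow i = (List.range' 0 (4 * i)).map Nat.bodd := by
  rw [← abPow_add, abPow_eq_map_bodd]
  ring_nf

theorem baPow_append_self (i : ℕ) :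
    baPow i ++ baPow i = (List.range' 1 (4 * i)).map Nat.bodd := by
  rw [← baPow_add, baPow_eq_map_bodd]
  ring_nf

theorem isSq_map_bodd_range'_iff {t n : ℕ} :
    IsSq ((List.range' t n).map Nat.bodd) ↔ ∃ i, 0 < i ∧ n = 4 * i := by
  constructor
  · rintro ⟨u, hu, hsq⟩
    have hn : n = u.length + u.length := by simpa using congrArg List.length hsq
    rw [hn, map_range'_add] at hsq
    obtain ⟨h₁, h₂⟩ := List.append_inj hsq (by simp)
    obtain ⟨j, hj⟩ := Nat.exists_eq_succ_of_ne_zero (List.length_pos_iff.2 hu).ne'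
    have hhead := congrArg List.head? (h₁.trans h₂.symm)
    simp only [hj, List.range'_succ, List.map_cons, List.head?_cons, Option.some.injEq] at hhead
    have := Nat.bodd_eq_bodd_iff.1 hhead
    exact ⟨u.length / 2, by omega, by omega⟩
  · rintro ⟨i, hi, rfl⟩
    refine ⟨(List.range' t (2 * i)).map Nat.bodd, by simp; omega, ?_⟩
    rw [show 4 * i = 2 * i + 2 * i by ring, map_range'_add,
      map_bodd_range'_congr _ (show (t + 2 * i) % 2 = t % 2 by omega)]

theorem isSq_infix_a_append_baPow_iff {m : ℕ} {s : List Bool} :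
    IsSq s ∧ s <:+: [la] ++ baPow m ↔
      ∃ i, 1 ≤ i ∧ i ≤ m / 2 ∧ (s = abPow i ++ abPow i ∨ s = baPow i ++ baPow i) := by
  rw [a_append_baPow_eq_map_bodd, infix_map_range'_iff]
  constructor
  · rintro ⟨hsq, t, ht, hs⟩
    obtain ⟨i, hi, hlen⟩ := isSq_map_bodd_range'_iff.1 (hs ▸ hsq)
    refine ⟨i, hi, by omega, ?_⟩
    rw [hs, hlen, abPow_append_self, baPow_append_self]
    rcases Nat.mod_two_eq_zero_or_one t with h | h
    · exact .inl (map_bodd_range'_congr _ h)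
    · exact .inr (map_bodd_range'_congr _ h)
  · rintro ⟨i, hi, hm, rfl | rfl⟩
    · rw [abPow_append_self]
      exact ⟨isSq_map_bodd_range'_iff.2 ⟨i, hi, rfl⟩, 0, by simp; omega, by simp⟩
    · rw [baPow_append_self]
      exact ⟨isSq_map_bodd_range'_iff.2 ⟨i, hi, rfl⟩, 1, by simp; omega, by simp⟩

theorem ncard_abPow_baPow_squares (n : ℕ) :
    {s | ∃ i, 1 ≤ i ∧ i ≤ n ∧ (s = abPow i ++ abPow i ∨ s = baPow i ++ baPow i)}.ncard =
      2 * n := by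
  have hunion :
      {s | ∃ i, 1 ≤ i ∧ i ≤ n ∧ (s = abPow i ++ abPow i ∨ s = baPow i ++ baPow i)} =
      (fun i => abPow i ++ abPow i) '' Set.Icc 1 n ∪
        (fun i => baPow i ++ baPow i) '' Set.Icc 1 n := by
    ext s
    simp only [Set.mem_union, Set.mem_image, Set.mem_Icc]
    aesop
  have hdisj : Disjoint ((fun i => abPow i ++ abPow i) '' Set.Icc 1 n)
      ((fun i => baPow i ++ baPow i) '' Set.Icc 1 n) := by
    refine Set.disjoint_left.2 ?_
    rintro _ ⟨i, hi, rfl⟩ ⟨j, hj, h⟩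
    simp only [abPow_append_self, baPow_append_self] at h
    have hfirst := congrArg (·[0]?) h
    simp [show 0 < 4 * i by grind, show 0 < 4 * j by grind] at hfirst
  have hinj_ab : Function.Injective fun i => abPow i ++ abPow i := fun i j h => by
    simpa [abPow_append_self] using congrArg List.length h
  have hinj_ba : Function.Injective fun i => baPow i ++ baPow i := fun i j h => by
    simpa [baPow_append_self] using congrArg List.length h
  rw [hunion, Set.ncard_union_eq hdisj, Set.ncard_image_of_injective _ hinj_ab,
    Set.ncard_image_of_injective _ hinj_ba, Set.ncard_Icc_nat]
  omega

/-- The distinct squares occurring in `a(ba)^{k+2}` are exactly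
`(ab)^i(ab)^i` and `(ba)^i(ba)^i` for `1 ≤ i ≤ ⌊(k+2)/2⌋`,
and there are exactly `2⌊(k+2)/2⌋` of them. -/
theorem stmt5 (k : ℕ) :
    {s | IsSq s ∧ s <:+: ([la] ++ baPow (k + 2))} =
      {s | ∃ i, 1 ≤ i ∧ i ≤ (k + 2) / 2 ∧
        (s = abPow i ++ abPow i ∨ s = baPow i ++ baPow i)} ∧
    {s | IsSq s ∧ s <:+: ([la] ++ baPow (k + 2))}.ncard = 2 * ((k + 2) / 2) := by
  have hsquares := Set.ext fun s => @isSq_infix_a_append_baPow_iff (k + 2) s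
  exact ⟨hsquares, hsquares ▸ ncard_abPow_baPow_squares _⟩
end

section
/- For every k ≥ 0, the circular word (f_k), where f_k = a(ba)^{k+1}a(ba)^{k+2}a(ba)^{k+1}a(ba)^{k+2}, contains exactly 10k + 16 - (k mod 2) distinct squares. -/
/-!
Write `x_k = u v` with `u = a(ba)^{k+1}` and `v = a(ba)^{k+2}`, so `f_k = x_k x_k` and every
factor of a rotation of `f_k` is a factor of the periodic word `x_k^ω`. Apart from its two
factors `aa` per period, `x_k^ω` alternates between `a` and `b`. Consider a square `w w` with
`|w| = q`.

* If `w` contains an `aa`, the square shifts it by `q`, so `q` is the distance between two factors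
  `aa`: `q ∈ {|u|, |v|, |uv|}`.
* If `w` alternates and `q` is odd, the centre of `w w` is an `aa`, and `w w = (a(ba)^t)^2`
  or `q = |u|`.
* If `w` alternates and `q` is even, all of `w w` alternates, so `q ≤ k + 2` and `w w` is
  `((ab)^{q/2})^2` or `((ba)^{q/2})^2`.

Distinct positions of the squares of half-length `|u|`, `|v|`, `|uv|` give distinct squares, as
the positions of `aa` inside them differ. Counting the five families gives
`2⌊(k+2)/2⌋ + (k+1) + (2k+3) + (2k+2) + (4k+8) = 10k + 16 - (k mod 2)`.
-/

open Finset Function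

section Factor

variable {α : Type*}

def factor (g : ℕ → α) (p l : ℕ) : List α := (List.range' p l).map g

variable {g h : ℕ → α} {p p' q l n : ℕ}

@[simp]
theorem length_factor (g : ℕ → α) (p l : ℕ) : (factor g p l).length = l := by simp [factor]

theorem factor_add (g : ℕ → α) (p a b : ℕ) :
    factor g p (a + b) = factor g p a ++ factor g (p + a) b := by
  simp [factor, ← List.range'_append_1]

theorem take_factor (hn : n ≤ l) : (factor g p l).take n = factor g p n := by
  simp [factor, ← List.map_take, List.take_range'_of_length_ge hn]

theorem drop_factor : (factor g p l).drop n = factor g (p + n) (l - n) := by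
  simp [factor, ← List.map_drop, List.drop_range']

theorem factor_eq_factor_iff :
    factor g p l = factor h p' l ↔ ∀ j < l, g (p + j) = h (p' + j) := by
  rw [List.ext_getElem_iff]
  simp [factor]

theorem factor_add_of_periodic (hg : Periodic g n) (p l : ℕ) :
    factor g (p + n) l = factor g p l :=
  factor_eq_factor_iff.2 fun j _ => by rw [add_right_comm, hg]

theorem factor_mod_of_periodic (hg : Periodic g n) (p l : ℕ) :
    factor g (p % n) l = factor g p l :=
  factor_eq_factor_iff.2 fun j _ => by
    rw [← hg.map_mod_nat (p % n + j), ← hg.map_mod_nat (p + j), Nat.mod_add_mod]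

theorem factor_mod_add_of_periodic (hg : Periodic g n) (p a l : ℕ) :
    factor g (p % n + a) l = factor g (p + a) l := by
  rw [← factor_mod_of_periodic hg, Nat.mod_add_mod, factor_mod_of_periodic hg]

theorem rot_factor_zero (hg : Periodic g n) (hp : p ≤ n) :
    rot (factor g 0 n) p = factor g p n := by
  conv_rhs => rw [← Nat.sub_add_cancel hp, factor_add, Nat.add_sub_cancel' hp]
  rw [rot, drop_factor, take_factor hp, zero_add]
  simpa using (factor_add_of_periodic hg 0 p).symm

theorem infix_factor_iff {s : List α} :
    s <:+: factor g p l ↔ ∃ a, a + s.length ≤ l ∧ s = factor g (p + a) s.length := by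
  constructor
  · rintro ⟨pre, post, hs⟩
    have hl := congrArg List.length hs
    simp only [List.length_append, length_factor] at hl
    refine ⟨pre.length, by omega, ?_⟩
    rw [← take_factor (by omega : s.length ≤ l - pre.length), ← drop_factor, ← hs,
      List.append_assoc, List.drop_left, List.take_left]
  · rintro ⟨a, hl, hs⟩
    rw [hs, ← Nat.add_sub_cancel' hl, factor_add, factor_add]
    exact List.infix_append _ _ _

theorem isSq_factor_iff (hq : 0 < q) :
    IsSq (factor g p (2 * q)) ↔ factor g p q = factor g (p + q) q := by
  rw [two_mul, factor_add]
  constructor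
  · rintro ⟨u, -, hu⟩
    have hl := congrArg List.length hu
    simp only [List.length_append, length_factor] at hl
    obtain ⟨h1, h2⟩ := List.append_inj hu (by simp; omega)
    rw [h1, h2]
  · intro h
    refine ⟨factor g p q, fun h0 => ?_, by rw [← h]⟩
    have := length_factor g p q
    rw [h0, List.length_nil] at this
    omega

theorem mem_cyclicSquares_factor_iff {N : ℕ} (hg : Periodic g N) {s : List α} :
    s ∈ cyclicSquares (factor g 0 N) ↔
      ∃ p q, 0 < q ∧ 2 * q ≤ N ∧ factor g p q = factor g (p + q) q ∧ s = factor g p (2 * q) := by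
  constructor
  · rintro ⟨⟨u, hu, rfl⟩, i, hi, hinf⟩
    rw [length_factor] at hi
    rw [rot_factor_zero hg hi.le, infix_factor_iff] at hinf
    obtain ⟨a, ha, hs⟩ := hinf
    have hq : 0 < u.length := List.length_pos_iff.2 hu
    have hs' : u ++ u = factor g (i + a) (2 * u.length) := by rw [hs]; simp [two_mul]
    rw [List.length_append] at ha
    refine ⟨i + a, u.length, hq, by omega, ?_, hs'⟩
    exact (isSq_factor_iff hq).1 (hs' ▸ ⟨u, hu, rfl⟩)
  · rintro ⟨p, q, hq, hN, hsq, rfl⟩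
    refine ⟨(isSq_factor_iff hq).2 hsq, p % N, by simpa using Nat.mod_lt _ (by omega), ?_⟩
    rw [rot_factor_zero hg (Nat.mod_lt _ (by omega)).le, infix_factor_iff]
    exact ⟨0, by simpa using hN, by simp [factor_mod_of_periodic hg]⟩

theorem card_union_of_length_lt [DecidableEq α] {s t : Finset (List α)} {n : ℕ}
    (hs : ∀ x ∈ s, x.length < n) (ht : ∀ x ∈ t, n ≤ x.length) : (s ∪ t).card = s.card + t.card :=
  card_union_of_disjoint (disjoint_left.2 fun x hx hx' => (ht x hx').not_gt (hs x hx))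

end Factor

section Alternation

variable {α : Type*} {g : ℕ → α} {p p' q l : ℕ}

theorem eq_succ_iff_of_factor_eq (h : factor g p l = factor g p' l) {j : ℕ} (hj : j + 1 < l) :
    g (p + j) = g (p + j + 1) ↔ g (p' + j) = g (p' + j + 1) := by
  have h' := factor_eq_factor_iff.1 h
  rw [h' j (by omega), add_assoc, h' (j + 1) hj, ← add_assoc]

theorem eq_succ_iff_of_square (h : factor g p q = factor g (p + q) q) {t : ℕ} (h₁ : p ≤ t)
    (h₂ : t + 1 < p + q) : g t = g (t + 1) ↔ g (t + q) = g (t + q + 1) := by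
  have := eq_succ_iff_of_factor_eq h (j := t - p) (by omega)
  rwa [show p + (t - p) = t by omega, show p + q + (t - p) = t + q by omega] at this

def AlternatesOn (g : ℕ → α) (a l : ℕ) : Prop :=
  ∀ t, a ≤ t → t + 1 < a + l → g t ≠ g (t + 1)

theorem AlternatesOn.eq_iff_even {g : ℕ → Bool} {a : ℕ} (h : AlternatesOn g a l) {j : ℕ}
    (hj : j < l) : g (a + j) = g a ↔ Even j := by
  induction j with
  | zero => simp
  | succ j ih =>
    have hne := h (a + j) (by omega) (by omega)
    rw [Nat.even_add_one, ← ih (by omega), ← add_assoc]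
    revert hne
    cases g (a + j) <;> cases g (a + j + 1) <;> cases g a <;> simp

theorem AlternatesOn.factor_eq {g h : ℕ → Bool} {a b : ℕ} (hg : AlternatesOn g a l)
    (hh : AlternatesOn h b l) (hab : g a = h b) : factor g a l = factor h b l :=
  factor_eq_factor_iff.2 fun j hj => by
    have h₁ := hg.eq_iff_even hj
    have h₂ := hh.eq_iff_even hj
    rw [hab] at h₁
    revert h₁ h₂
    cases g (a + j) <;> cases h (b + j) <;> cases h b <;> simp

end Alternation

section FWord

variable {k p q t : ℕ}

/-- The letter of `x_k^ω` at position `t` (`b = true`): in `x_k` the letter `b` sits at the odd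
positions before the second `a`, which is at position `2k+3`, and at the even positions after it. -/
def xLetter (k t : ℕ) : Bool :=
  decide ((t % (4 * k + 8) % 2 = 1 ∧ t % (4 * k + 8) < 2 * k + 3) ∨
    (t % (4 * k + 8) % 2 = 0 ∧ 2 * k + 3 < t % (4 * k + 8)))

/-- `xLetter k t = true` unfolded on the first three periods, in a form `omega` can use. -/
def IsBAt (k t : ℕ) : Prop :=
  (t % 2 = 1 ∧ (t < 2 * k + 3 ∨ (4 * k + 8 ≤ t ∧ t < 6 * k + 11) ∨
    (8 * k + 16 ≤ t ∧ t < 10 * k + 19))) ∨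
  (t % 2 = 0 ∧ ((2 * k + 3 < t ∧ t < 4 * k + 8) ∨ (6 * k + 11 ≤ t ∧ t < 8 * k + 16) ∨
    10 * k + 19 ≤ t))

theorem periodic_xLetter (k : ℕ) : Periodic (xLetter k) (4 * k + 8) := fun t => by
  simp only [xLetter, Nat.add_mod_right]

theorem xLetter_eq_true_iff (ht : t < 12 * k + 24) : xLetter k t = true ↔ IsBAt k t := by
  have hpar : t % (4 * k + 8) % 2 = t % 2 := Nat.mod_mod_of_dvd t ⟨2 * k + 4, by ring⟩
  have hr := Nat.mod_lt t (show 4 * k + 8 > 0 by omega)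
  have hdiv := Nat.mod_add_div t (4 * k + 8)
  have h3 : t / (4 * k + 8) < 3 := Nat.div_lt_of_lt_mul (by omega)
  simp only [xLetter, IsBAt, decide_eq_true_eq]
  generalize t / (4 * k + 8) = d at hdiv h3
  generalize t % (4 * k + 8) = r at hpar hr hdiv ⊢
  interval_cases d <;> omega

theorem xLetter_eq_xLetter_iff {t' : ℕ} (ht : t < 12 * k + 24) (ht' : t' < 12 * k + 24) :
    xLetter k t = xLetter k t' ↔ (IsBAt k t ↔ IsBAt k t') := by
  rw [Bool.eq_iff_iff, xLetter_eq_true_iff ht, xLetter_eq_true_iff ht']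

theorem xLetter_eq_xLetter_succ_iff (ht : t + 1 < 12 * k + 24) :
    xLetter k t = xLetter k (t + 1) ↔
      t = 2 * k + 2 ∨ t = 4 * k + 7 ∨ t = 6 * k + 10 ∨ t = 8 * k + 15 ∨ t = 10 * k + 18 := by
  rw [xLetter_eq_xLetter_iff (by omega) ht]
  simp only [IsBAt]
  omega

theorem baPow_eq_factor {g : ℕ → Bool} {m : ℕ}
    (h : ∀ j < 2 * m, g (p + j) = decide (j % 2 = 0)) : baPow m = factor g p (2 * m) := by
  induction m generalizing p with
  | zero => simp [baPow, factor]
  | succ m ih =>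
    have h₀ := h 0 (by omega)
    have h₁ := h 1 (by omega)
    simp only [Nat.zero_mod, Nat.one_mod, decide_true, add_zero] at h₀ h₁
    rw [show 2 * (m + 1) = 2 + 2 * m by ring, factor_add, ← ih fun j hj => by
      rw [add_assoc, h (2 + j) (by omega)]; simp]
    simp [baPow, List.replicate_succ, factor, List.range'_succ, h₀, h₁, lb, la]

theorem xWord_eq_factor (k : ℕ) : xWord k = factor (xLetter k) 0 (4 * k + 8) := by
  have hba : ∀ p m, 2 * m + p ≤ 4 * k + 8 → (p % 2 = 1 ∧ p + 2 * m ≤ 2 * k + 3 ∨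
      p % 2 = 0 ∧ 2 * k + 3 < p) → baPow m = factor (xLetter k) p (2 * m) :=
    fun p m hm hp => baPow_eq_factor fun j hj => by
      rw [Bool.eq_iff_iff, xLetter_eq_true_iff (by omega), decide_eq_true_iff]
      simp only [IsBAt]
      omega
  have ha : ∀ p, (p = 0 ∨ p = 2 * k + 3) → [la] = factor (xLetter k) p 1 := fun p hp => by
    have : xLetter k p = false := by
      rw [← Bool.not_eq_true, xLetter_eq_true_iff (by omega)]
      simp only [IsBAt]
      omega
    simp [factor, this, la]
  rw [show 4 * k + 8 = 1 + 2 * (k + 1) + 1 + 2 * (k + 2) by ring, factor_add, factor_add,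
    factor_add, xWord, ← hba _ _ (by omega) (by omega), ← ha _ (by omega), ← ha _ (by omega),
    ← hba _ _ (by omega) (by omega)]

theorem fWord_eq_factor (k : ℕ) : fWord k = factor (xLetter k) 0 (8 * k + 16) := by
  rw [show 8 * k + 16 = 4 * k + 8 + (4 * k + 8) by ring, factor_add, fWord, xWord_eq_factor,
    zero_add]
  simpa using (factor_add_of_periodic (periodic_xLetter k) 0 _).symm

end FWord

section Classification

variable {k p q : ℕ}

theorem alternatesOn_of_square_of_even (hp : p < 4 * k + 8) (hq : q < 4 * k + 8)
    (heven : q % 2 = 0) (hsq : factor (xLetter k) p q = factor (xLetter k) (p + q) q) :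
    AlternatesOn (xLetter k) p (2 * q) := by
  have hfirst : AlternatesOn (xLetter k) p q := fun t h₁ h₂ hrep => by
    have hrep' := (eq_succ_iff_of_square hsq h₁ h₂).1 hrep
    rw [xLetter_eq_xLetter_succ_iff (by omega)] at hrep hrep'
    omega
  intro t h₁ h₂
  rcases lt_trichotomy (t + 1) (p + q) with h | h | h
  · exact hfirst t h₁ h
  · -- the first half alternates and has even length, so its last letter differs from its first,
    -- which is also the first letter of the second half
    have hlast := hfirst.eq_iff_even (j := q - 1) (by omega)
    have hfirst_eq := factor_eq_factor_iff.1 hsq 0 (by omega)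
    rw [show p + (q - 1) = t by omega, Nat.even_iff, show (q - 1) % 2 = 1 by omega] at hlast
    rw [add_zero, add_zero] at hfirst_eq
    rw [h, ← hfirst_eq]
    simpa using hlast
  · have hshift := eq_succ_iff_of_square hsq (t := t - q) (by omega) (by omega)
    rw [Nat.sub_add_cancel (by omega : q ≤ t)] at hshift
    exact fun hrep => hfirst (t - q) (by omega) (by omega) (hshift.2 hrep)

theorem AlternatesOn.le_two_mul_add_five (hp : p < 4 * k + 8) {l : ℕ}
    (h : AlternatesOn (xLetter k) p l) : l ≤ 2 * k + 5 := by
  by_contra hl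
  rcases le_or_gt p (2 * k + 2) with hp' | hp'
  · exact h (2 * k + 2) hp' (by omega) ((xLetter_eq_xLetter_succ_iff (by omega)).2 (by omega))
  · exact h (4 * k + 7) (by omega) (by omega)
      ((xLetter_eq_xLetter_succ_iff (by omega)).2 (by omega))

theorem factor_eq_or_of_alternatesOn {l : ℕ} (hl : l ≤ 2 * k + 4)
    (h : AlternatesOn (xLetter k) p l) :
    factor (xLetter k) p l = factor (xLetter k) (2 * k + 3) l ∨
      factor (xLetter k) p l = factor (xLetter k) (2 * k + 4) l := by
  have halt : ∀ a, (a = 2 * k + 3 ∨ a = 2 * k + 4) → AlternatesOn (xLetter k) a l :=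
    fun a ha t h₁ h₂ hrep => by
      rw [xLetter_eq_xLetter_succ_iff (by omega)] at hrep
      omega
  have ha : xLetter k (2 * k + 3) = false := by
    rw [← Bool.not_eq_true, xLetter_eq_true_iff (by omega)]
    simp only [IsBAt]
    omega
  have hb : xLetter k (2 * k + 4) = true := by
    rw [xLetter_eq_true_iff (by omega)]
    simp only [IsBAt]
    omega
  cases hgp : xLetter k p
  · exact Or.inl (h.factor_eq (halt _ (Or.inl rfl)) (hgp.trans ha.symm))
  · exact Or.inr (h.factor_eq (halt _ (Or.inr rfl)) (hgp.trans hb.symm))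

theorem isBAt_iff_of_factor_eq {l p' j : ℕ}
    (h : factor (xLetter k) p l = factor (xLetter k) p' l) (hj : j < l)
    (hb : p + j < 12 * k + 24) (hb' : p' + j < 12 * k + 24) :
    IsBAt k (p + j) ↔ IsBAt k (p' + j) :=
  (xLetter_eq_xLetter_iff hb hb').1 (factor_eq_factor_iff.1 h j hj)

theorem square_cases_of_repeat (hp : p < 4 * k + 8) (hq : q < 4 * k + 8)
    (hsq : factor (xLetter k) p q = factor (xLetter k) (p + q) q) {t : ℕ} (h₁ : p ≤ t)
    (h₂ : t + 1 < p + q) (hrep : xLetter k t = xLetter k (t + 1)) :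
    (q = 2 * k + 3 ∧ 2 * k + 6 ≤ p) ∨ (q = 2 * k + 5 ∧ p ≤ 2 * k + 1) := by
  have hrep' := (eq_succ_iff_of_square hsq h₁ h₂).1 hrep
  rw [xLetter_eq_xLetter_succ_iff (by omega)] at hrep hrep'
  obtain h | h | ⟨rfl, rfl⟩ | ⟨rfl, rfl⟩ : (q = 2 * k + 3 ∧ 2 * k + 6 ≤ p) ∨
      (q = 2 * k + 5 ∧ p ≤ 2 * k + 1) ∨ (q = 2 * k + 5 ∧ p = 2 * k + 2) ∨
      (q = 2 * k + 5 ∧ p = 4 * k + 7) := by omega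
  · exact Or.inl h
  · exact Or.inr h
  · have := isBAt_iff_of_factor_eq hsq (j := 2 * k + 4) (by omega) (by omega) (by omega)
    simp only [IsBAt] at this
    omega
  · have := isBAt_iff_of_factor_eq hsq (j := 0) (by omega) (by omega) (by omega)
    simp only [IsBAt] at this
    omega

theorem square_cases_of_alternatesOn (hp : p < 4 * k + 8) (hq : q ≤ 4 * k + 8)
    (hodd : q % 2 = 1) (hsq : factor (xLetter k) p q = factor (xLetter k) (p + q) q)
    (halt : AlternatesOn (xLetter k) p q) :
    q ≤ 2 * k + 3 ∧ (p + q = 2 * k + 3 ∨ p + q = 4 * k + 8) := by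
  -- the first half alternates and has odd length, so its last letter equals its first, which is
  -- also the first letter of the second half: the square has `aa` or `bb` at its centre
  have hlast := (halt.eq_iff_even (j := q - 1) (by omega)).2 (Nat.even_iff.2 (by omega))
  have hcentre : xLetter k (p + q - 1) = xLetter k (p + q - 1 + 1) := by
    rw [show p + q - 1 + 1 = p + q by omega, show p + q - 1 = p + (q - 1) by omega, hlast]
    simpa using factor_eq_factor_iff.1 hsq 0 (by omega)
  rw [xLetter_eq_xLetter_succ_iff (by omega)] at hcentre
  obtain h | ⟨h, hq'⟩ | h : (q ≤ 2 * k + 3 ∧ (p + q = 2 * k + 3 ∨ p + q = 4 * k + 8)) ∨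
      (p + q = 4 * k + 8 ∧ 2 * k + 3 < q) ∨ p + q = 6 * k + 11 := by omega
  · exact h
  · have := isBAt_iff_of_factor_eq hsq (j := 2 * k + 3) (by omega) (by omega) (by omega)
    simp only [IsBAt] at this
    omega
  · have := (xLetter_eq_xLetter_iff (by omega) (by omega)).1 hlast
    simp only [IsBAt] at this
    omega

theorem square_cases_of_odd (hp : p < 4 * k + 8) (hq : q ≤ 4 * k + 8) (hodd : q % 2 = 1)
    (hsq : factor (xLetter k) p q = factor (xLetter k) (p + q) q) :
    (q ≤ 2 * k + 3 ∧ (p + q = 2 * k + 3 ∨ p + q = 4 * k + 8)) ∨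
      (q = 2 * k + 3 ∧ 2 * k + 6 ≤ p) ∨ (q = 2 * k + 5 ∧ p ≤ 2 * k + 1) := by
  by_cases halt : AlternatesOn (xLetter k) p q
  · exact Or.inl (square_cases_of_alternatesOn hp hq hodd hsq halt)
  · simp only [AlternatesOn, not_forall, not_not] at halt
    obtain ⟨t, h₁, h₂, hrep⟩ := halt
    exact Or.inr (square_cases_of_repeat hp (by omega) hsq h₁ h₂ hrep)

end Classification

section Squares

variable {k p q : ℕ}

def sqAt (k p q : ℕ) : List Bool := factor (xLetter k) p (2 * q)

theorem length_sqAt : (sqAt k p q).length = 2 * q := length_factor _ _ _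

def uvSquares (k : ℕ) : Finset (List Bool) :=
  (range (4 * k + 8)).image fun p => sqAt k p (4 * k + 8)

def vSquares (k : ℕ) : Finset (List Bool) :=
  (range (2 * k + 2)).image fun p => sqAt k p (2 * k + 5)

def uSquares (k : ℕ) : Finset (List Bool) :=
  (Icc (2 * k + 5) (4 * k + 7)).image fun p => sqAt k p (2 * k + 3)

def shortOddSquares (k : ℕ) : Finset (List Bool) :=
  (range (k + 1)).image fun t => sqAt k (2 * k + 2 - 2 * t) (2 * t + 1)

def shortEvenSquares (k : ℕ) : Finset (List Bool) :=
  (range ((k + 2) / 2) ×ˢ range 2).image fun c => sqAt k (2 * k + 3 + c.2) (2 * c.1 + 2)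

def fSquares (k : ℕ) : Finset (List Bool) :=
  shortEvenSquares k ∪ shortOddSquares k ∪ uSquares k ∪ vSquares k ∪ uvSquares k

theorem sqAt_sub_eq_sqAt_sub (hodd : q % 2 = 1) (hq : q ≤ 2 * k + 3) :
    sqAt k (4 * k + 8 - q) q = sqAt k (2 * k + 3 - q) q :=
  factor_eq_factor_iff.2 fun j hj => by
    rw [xLetter_eq_xLetter_iff (by omega) (by omega)]
    simp only [IsBAt]
    omega

theorem sqAt_mem_shortOddSquares (hodd : q % 2 = 1) (hq : q ≤ 2 * k + 1)
    (hp : p = 2 * k + 3 - q ∨ p = 4 * k + 8 - q) : sqAt k p q ∈ shortOddSquares k := by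
  obtain ⟨t, rfl⟩ : ∃ t, q = 2 * t + 1 := ⟨q / 2, by omega⟩
  have hp' : sqAt k p (2 * t + 1) = sqAt k (2 * k + 2 - 2 * t) (2 * t + 1) := by
    rcases hp with rfl | rfl
    · congr 1
      omega
    · rw [sqAt_sub_eq_sqAt_sub hodd (by omega)]
      congr 1
      omega
  rw [hp']
  exact mem_image_of_mem _ (mem_range.2 (by omega))

theorem sqAt_mem_uSquares (hp : p = 0 ∨ 2 * k + 5 ≤ p ∧ p ≤ 4 * k + 7) :
    sqAt k p (2 * k + 3) ∈ uSquares k := by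
  rcases hp with rfl | hp
  · have := sqAt_sub_eq_sqAt_sub (k := k) (q := 2 * k + 3) (by omega) le_rfl
    rw [show 4 * k + 8 - (2 * k + 3) = 2 * k + 5 by omega, Nat.sub_self] at this
    rw [← this]
    exact mem_image_of_mem _ (mem_Icc.2 (by omega))
  · exact mem_image_of_mem _ (mem_Icc.2 hp)

theorem sqAt_mem_shortEvenSquares (heven : q % 2 = 0) (hq₀ : 0 < q) (hq : q ≤ k + 2)
    (hp : sqAt k p q = sqAt k (2 * k + 3) q ∨ sqAt k p q = sqAt k (2 * k + 4) q) :
    sqAt k p q ∈ shortEvenSquares k := by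
  obtain ⟨m, rfl⟩ : ∃ m, q = 2 * m + 2 := ⟨q / 2 - 1, by omega⟩
  rw [shortEvenSquares, mem_image]
  rcases hp with h | h
  · exact ⟨(m, 0), mem_product.2 ⟨mem_range.2 (by omega), by simp⟩, h.symm⟩
  · exact ⟨(m, 1), mem_product.2 ⟨mem_range.2 (by omega), by simp⟩, h.symm⟩

theorem sqAt_mem_fSquares (hp : p < 4 * k + 8) (hq₀ : 0 < q) (hq : q ≤ 4 * k + 8)
    (hsq : factor (xLetter k) p q = factor (xLetter k) (p + q) q) : sqAt k p q ∈ fSquares k := by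
  simp only [fSquares, mem_union]
  rcases eq_or_lt_of_le hq with rfl | hq'
  · exact Or.inr (mem_image_of_mem _ (mem_range.2 hp))
  rcases Nat.mod_two_eq_zero_or_one q with heven | hodd
  · have halt := alternatesOn_of_square_of_even hp hq' heven hsq
    have hle := halt.le_two_mul_add_five hp
    exact Or.inl (Or.inl (Or.inl (Or.inl (sqAt_mem_shortEvenSquares heven hq₀ (by omega)
      (factor_eq_or_of_alternatesOn (by omega) halt)))))
  rcases square_cases_of_odd hp hq hodd hsq with ⟨hq', hpq⟩ | ⟨rfl, hp'⟩ | ⟨rfl, hp'⟩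
  · rcases Nat.lt_or_ge q (2 * k + 2) with hq'' | hq''
    · exact Or.inl (Or.inl (Or.inl (Or.inr
        (sqAt_mem_shortOddSquares hodd (by omega) (by omega)))))
    · obtain rfl : q = 2 * k + 3 := by omega
      exact Or.inl (Or.inl (Or.inr (sqAt_mem_uSquares (by omega))))
  · exact Or.inl (Or.inl (Or.inr (sqAt_mem_uSquares (by omega))))
  · exact Or.inl (Or.inr (mem_image_of_mem _ (mem_range.2 (by omega))))

theorem square_of_mem_fSquares {s : List Bool} (hs : s ∈ fSquares k) :
    ∃ p q, 0 < q ∧ 2 * q ≤ 8 * k + 16 ∧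
      factor (xLetter k) p q = factor (xLetter k) (p + q) q ∧ s = sqAt k p q := by
  have hsq : ∀ p q, p + 2 * q ≤ 12 * k + 24 →
      (∀ j < q, IsBAt k (p + j) ↔ IsBAt k (p + q + j)) →
      factor (xLetter k) p q = factor (xLetter k) (p + q) q := fun p q hb h =>
    factor_eq_factor_iff.2 fun j hj => (xLetter_eq_xLetter_iff (by omega) (by omega)).2 (h j hj)
  simp only [fSquares, mem_union, uvSquares, vSquares, uSquares, shortOddSquares,
    shortEvenSquares, mem_image, mem_range, mem_Icc, mem_product] at hs
  rcases hs with ((((⟨⟨m, e⟩, ⟨hm, he⟩, rfl⟩ | ⟨t, ht, rfl⟩) | ⟨p, hp, rfl⟩) | ⟨p, hp, rfl⟩) |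
    ⟨p, hp, rfl⟩)
  all_goals
    refine ⟨_, _, by omega, by omega, ?_, rfl⟩
    first
    | exact (factor_add_of_periodic (periodic_xLetter k) _ _).symm
    | exact hsq _ _ (by omega) fun j hj => by simp only [IsBAt]; omega

end Squares

theorem cyclicSquares_fWord (k : ℕ) : cyclicSquares (fWord k) = fSquares k := by
  have hper : Periodic (xLetter k) (8 * k + 16) := by
    simpa [show 2 * (4 * k + 8) = 8 * k + 16 by ring] using (periodic_xLetter k).nat_mul 2
  ext s
  rw [fWord_eq_factor, mem_cyclicSquares_factor_iff hper, mem_coe]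
  constructor
  · rintro ⟨p, q, hq₀, hq, hsq, rfl⟩
    have h := sqAt_mem_fSquares (p := p % (4 * k + 8)) (Nat.mod_lt _ (by omega)) hq₀ (by omega)
      (by rwa [factor_mod_add_of_periodic (periodic_xLetter k),
        factor_mod_of_periodic (periodic_xLetter k)])
    rwa [sqAt, factor_mod_of_periodic (periodic_xLetter k)] at h
  · exact square_of_mem_fSquares

section Counting

variable {k : ℕ}

theorem repeat_iff_of_sqAt_eq {p p' q j : ℕ} (h : sqAt k p q = sqAt k p' q) (hj : j + 1 < 2 * q)
    (hb : p + j + 1 < 12 * k + 24) (hb' : p' + j + 1 < 12 * k + 24) :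
    (p + j = 2 * k + 2 ∨ p + j = 4 * k + 7 ∨ p + j = 6 * k + 10 ∨ p + j = 8 * k + 15 ∨
        p + j = 10 * k + 18) ↔
      (p' + j = 2 * k + 2 ∨ p' + j = 4 * k + 7 ∨ p' + j = 6 * k + 10 ∨ p' + j = 8 * k + 15 ∨
        p' + j = 10 * k + 18) := by
  rw [← xLetter_eq_xLetter_succ_iff hb, ← xLetter_eq_xLetter_succ_iff hb']
  exact eq_succ_iff_of_factor_eq h hj

theorem card_uvSquares : (uvSquares k).card = 4 * k + 8 := by
  rw [uvSquares, card_image_of_injOn, card_range]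
  intro p hp p' hp' h
  simp only [coe_range, Set.mem_Iio] at hp hp'
  have := repeat_iff_of_sqAt_eq h (j := 4 * k + 7 - p) (by omega) (by omega) (by omega)
  have := repeat_iff_of_sqAt_eq h (j := 4 * k + 7 - p') (by omega) (by omega) (by omega)
  omega

theorem card_vSquares : (vSquares k).card = 2 * k + 2 := by
  rw [vSquares, card_image_of_injOn, card_range]
  intro p hp p' hp' h
  simp only [coe_range, Set.mem_Iio] at hp hp'
  have := repeat_iff_of_sqAt_eq h (j := 2 * k + 2 - p) (by omega) (by omega) (by omega)
  have := repeat_iff_of_sqAt_eq h (j := 2 * k + 2 - p') (by omega) (by omega) (by omega)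
  omega

theorem card_uSquares : (uSquares k).card = 2 * k + 3 := by
  rw [uSquares, card_image_of_injOn, Nat.card_Icc]
  · omega
  intro p hp p' hp' h
  simp only [coe_Icc, Set.mem_Icc] at hp hp'
  have := repeat_iff_of_sqAt_eq h (j := 4 * k + 7 - p) (by omega) (by omega) (by omega)
  have := repeat_iff_of_sqAt_eq h (j := 4 * k + 7 - p') (by omega) (by omega) (by omega)
  omega

theorem card_shortOddSquares : (shortOddSquares k).card = k + 1 := by
  rw [shortOddSquares, card_image_of_injOn, card_range]
  intro t _ t' _ h
  have := congrArg List.length h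
  simp only [length_sqAt] at this
  omega

theorem card_shortEvenSquares : (shortEvenSquares k).card = (k + 2) / 2 * 2 := by
  rw [shortEvenSquares, card_image_of_injOn, card_product, card_range, card_range]
  rintro ⟨m, e⟩ hc ⟨m', e'⟩ hc' h
  simp only [coe_product, coe_range, Set.mem_prod, Set.mem_Iio] at hc hc'
  have hm := congrArg List.length h
  simp only [length_sqAt] at hm
  obtain rfl : m = m' := by omega
  have := isBAt_iff_of_factor_eq h (j := 0) (by omega) (by omega) (by omega)
  simp only [IsBAt] at this
  simp only [Prod.mk.injEq, true_and]
  omega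

theorem card_fSquares : (fSquares k).card = 10 * k + 16 - k % 2 := by
  have hE : ∀ s ∈ shortEvenSquares k, s.length % 4 = 0 ∧ s.length ≤ 2 * k + 4 := by
    simp only [shortEvenSquares, forall_mem_image, mem_product, mem_range, length_sqAt]
    omega
  have hO : ∀ s ∈ shortOddSquares k, s.length % 4 = 2 ∧ s.length ≤ 4 * k + 2 := by
    simp only [shortOddSquares, forall_mem_image, mem_range, length_sqAt]
    omega
  have hU : ∀ s ∈ uSquares k, s.length = 4 * k + 6 := by
    simp only [uSquares, forall_mem_image, length_sqAt]
    omega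
  have hV : ∀ s ∈ vSquares k, s.length = 4 * k + 10 := by
    simp only [vSquares, forall_mem_image, length_sqAt]
    omega
  have hUV : ∀ s ∈ uvSquares k, s.length = 8 * k + 16 := by
    simp only [uvSquares, forall_mem_image, length_sqAt]
    omega
  have hEO : Disjoint (shortEvenSquares k) (shortOddSquares k) :=
    disjoint_left.2 fun s h h' => by have := hE s h; have := hO s h'; omega
  rw [fSquares, card_union_of_length_lt (n := 8 * k + 16),
    card_union_of_length_lt (n := 4 * k + 10), card_union_of_length_lt (n := 4 * k + 6),
    card_union_of_disjoint hEO, card_shortEvenSquares, card_shortOddSquares, card_uSquares,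
    card_vSquares, card_uvSquares]
  · omega
  all_goals
    try simp only [Finset.forall_mem_union]
    repeat' constructor
  all_goals
    intro s hs
    first
    | have := hE s hs; omega
    | have := hO s hs; omega
    | have := hU s hs; omega
    | have := hV s hs; omega
    | have := hUV s hs; omega

end Counting

/-- The circular word `(f_k)` contains exactly `10k + 16 - (k mod 2)` distinct squares. -/
theorem stmt6 (k : ℕ) :
    (cyclicSquares (fWord k)).ncard = 10 * k + 16 - k % 2 := by
  rw [cyclicSquares_fWord, Set.ncard_coe_finset, card_fSquares]
end

section
/- For any word x and any position i of x, at most two distinct squares have their rightmost occurrence in x starting at position i. -/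
/-! Let `u²`, `v²`, `w²` start at `i` with `|u| < |v| < |w|`, so that each is a prefix of the next.
If `2|u| ≤ |w|`, then `u²` is a prefix of `w` and reappears at `i + |w|`. Otherwise `u` has the
periods `|v| - |u|` and `|w| - |v|`, whose sum is below `|u|`; by Fine and Wilf `v` then has a period
dividing both `|u|` and `|v| - |u|`, so `v²` starts again with `u²` at offset `|v| - |u|`. Either way
the occurrence of `u²` at `i` is not the rightmost one. -/

open List

section Squares

variable {α : Type*}

theorem List.HasPeriod.of_dvd {w : List α} {d p : ℕ} (h : w.HasPeriod d) (hdp : d ∣ p) :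
    w.HasPeriod p := by
  rw [hasPeriod_iff_forall_getElem?_mod] at h ⊢
  intro i hi
  rw [h i hi, h (i % p) ((Nat.mod_le i p).trans_lt hi), Nat.mod_mod_of_dvd i hdp]

theorem List.HasPeriod.of_take_of_dvd {w : List α} {n r g : ℕ} (hr : w.HasPeriod r)
    (hg : (w.take n).HasPeriod g) (hgr : g ∣ r) (hr₀ : 0 < r) (hrn : r ≤ n) :
    w.HasPeriod g := by
  rw [hasPeriod_iff_forall_getElem?_mod] at hr hg ⊢
  intro i hi
  have hir : i % r < n := (Nat.mod_lt i hr₀).trans_le hrn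
  have hgn : i % r % g < n := (Nat.mod_le _ g).trans_lt hir
  have hil : i % r < (w.take n).length := by
    simp only [length_take]
    exact lt_min hir ((Nat.mod_le i r).trans_lt hi)
  rw [hr i hi, ← getElem?_take_of_lt hir, hg _ hil, getElem?_take_of_lt hgn,
    Nat.mod_mod_of_dvd i hgr]

theorem eq_append_take_of_sq_prefix_sq {u v : List α} (h : u ++ u <+: v ++ v)
    (huv : u.length ≤ v.length) (hvu : v.length ≤ 2 * u.length) :
    v = u ++ u.take (v.length - u.length) := by
  rw [prefix_iff_eq_take] at h
  calc v = (v ++ v).take v.length := take_left.symm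
    _ = (u ++ u).take v.length := by rw [h, take_take, length_append]; congr 1; omega
    _ = u ++ u.take (v.length - u.length) := by rw [take_append, take_of_length_le huv]

theorem hasPeriod_of_sq_prefix_sq {u v : List α} (h : u ++ u <+: v ++ v)
    (huv : u.length ≤ v.length) (hvu : v.length ≤ 2 * u.length) :
    u.HasPeriod (v.length - u.length) := by
  have hv := eq_append_take_of_sq_prefix_sq h huv hvu
  have h' : u <+: u.take (v.length - u.length) ++ v := by
    rw [← prefix_append_right_inj u, ← append_assoc, ← hv]
    exact h
  refine prefix_of_prefix_length_le h' ?_ (by simp)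
  exact (prefix_append_right_inj _).2 (hv ▸ prefix_append u _)

theorem sq_prefix_drop_of_sq_prefix_sq_prefix_sq {u v w : List α}
    (huv : u.length < v.length) (hvw : v.length < w.length) (hwu : w.length ≤ 2 * u.length)
    (h₁ : u ++ u <+: v ++ v) (h₂ : v ++ v <+: w ++ w) :
    u ++ u <+: (v ++ v).drop (v.length - u.length) := by
  set p := v.length - u.length
  set r := w.length - v.length
  have hv : v = u ++ u.take p := eq_append_take_of_sq_prefix_sq h₁ huv.le (by omega)
  have hup : u.HasPeriod p := hasPeriod_of_sq_prefix_sq h₁ huv.le (by omega)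
  have hvr : v.HasPeriod r := hasPeriod_of_sq_prefix_sq h₂ hvw.le (by omega)
  have hur : u.HasPeriod r := hvr.infix (hv ▸ (prefix_append u _).isInfix)
  have hug : u.HasPeriod (p.gcd r) := hup.gcd hur (by omega)
  have hvg : v.HasPeriod (p.gcd r) :=
    hvr.of_take_of_dvd (n := u.length) (by rwa [hv, take_left]) (Nat.gcd_dvd_right p r)
      (by omega) (by omega)
  have hvu : v.HasPeriod u.length := by
    show v <+: v.take u.length ++ v
    rw [hv, take_left, prefix_append_right_inj]
    exact (take_prefix p u).trans (prefix_append u _)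
  set d := (p.gcd r).gcd u.length
  have hgp : p.gcd r ≤ p := Nat.gcd_le_left r (by omega)
  have hvd : v.HasPeriod d := hvg.gcd hvu (by omega)
  have hdp : d ∣ p := (Nat.gcd_dvd_left _ _).trans (Nat.gcd_dvd_left p r)
  have hdv : d ∣ v.length := by
    rw [show v.length = u.length + p by omega]
    exact dvd_add (Nat.gcd_dvd_right _ _) hdp
  have hvv : (v ++ v).HasPeriod d := by
    simpa using hvd.take_append d v.length v hdv le_rfl
  exact prefix_of_prefix_length_le h₁ ((hvv.of_dvd hdp).drop_prefix) (by simp; omega)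

theorem occursAt_iff_prefix_drop {s x : List α} {i : ℕ} : occursAt s x i ↔ s <+: x.drop i := by
  rw [prefix_iff_eq_take, eq_comm]
  rfl

theorem occursAt.add {s t x : List α} {i j : ℕ} (ht : occursAt t x i) (hs : s <+: t.drop j) :
    occursAt s x (i + j) := by
  rw [occursAt_iff_prefix_drop] at ht ⊢
  rw [← drop_drop]
  exact hs.trans (ht.drop j)

theorem occursAt.prefix {s t x : List α} {i : ℕ} (hs : occursAt s x i) (ht : occursAt t x i)
    (hst : s.length ≤ t.length) : s <+: t :=
  prefix_of_prefix_length_le (occursAt_iff_prefix_drop.1 hs) (occursAt_iff_prefix_drop.1 ht) hst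

theorem occursAt.eq_of_length_eq {s t x : List α} {i : ℕ} (hs : occursAt s x i)
    (ht : occursAt t x i) (hst : s.length = t.length) : s = t :=
  (hs.prefix ht hst.le).eq_of_length hst

theorem IsSq.not_rightmostStartsAt {s t t' x : List α} {i : ℕ} (hs : IsSq s) (ht : IsSq t)
    (ht' : IsSq t') (hst : s.length < t.length) (htt' : t.length < t'.length)
    (hto : occursAt t x i) (ht'o : occursAt t' x i) : ¬ rightmostStartsAt s x i := by
  obtain ⟨u, -, rfl⟩ := hs
  obtain ⟨v, -, rfl⟩ := ht
  obtain ⟨w, -, rfl⟩ := ht'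
  simp only [length_append] at hst htt'
  rintro ⟨hu, hright⟩
  have h₁ : u ++ u <+: v ++ v := hu.prefix hto (by simp; omega)
  rcases le_or_gt (2 * u.length) w.length with hlong | hshort
  · have huw : u ++ u <+: w :=
      prefix_of_prefix_length_le (hu.prefix ht'o (by simp; omega)) (prefix_append w w) (by simp; omega)
    have := hright _ (ht'o.add (by rwa [drop_left]))
    omega
  · have h₂ : v ++ v <+: w ++ w := hto.prefix ht'o (by simp; omega)
    have := hright _ (hto.add (sq_prefix_drop_of_sq_prefix_sq_prefix_sq (by omega) (by omega)
      (by omega) h₁ h₂))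
    omega

end Squares

/-- At most two distinct squares have their rightmost occurrence in `x` starting at `i`. -/
theorem stmt8 {α : Type*} (x : List α) (i : ℕ) :
    {s | IsSq s ∧ rightmostStartsAt s x i}.ncard ≤ 2 := by
  set S := {s | IsSq s ∧ rightmostStartsAt s x i}
  rcases S.eq_empty_or_nonempty with hS | hS
  · simp [hS]
  set s := Function.argminOn length S hS
  obtain ⟨hsq, hsr⟩ : s ∈ S := Function.argminOn_mem length S hS
  set T := {t ∈ S | s.length < t.length}
  have hT : T.Subsingleton := by
    rintro t ⟨⟨htq, htr⟩, hst⟩ t' ⟨⟨ht'q, ht'r⟩, hst'⟩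
    rcases lt_trichotomy t.length t'.length with h | h | h
    · exact (hsq.not_rightmostStartsAt htq ht'q hst h htr.1 ht'r.1 hsr).elim
    · exact htr.1.eq_of_length_eq ht'r.1 h
    · exact (hsq.not_rightmostStartsAt ht'q htq hst' h ht'r.1 htr.1 hsr).elim
  have hST : S ⊆ insert s T := by
    intro t ht
    refine (eq_or_ne t s).imp id fun hne => ⟨ht, ?_⟩
    refine (Function.argminOn_le length S ht).lt_of_ne fun h => hne ?_
    exact (hsr.1.eq_of_length_eq ht.2.1 h).symm
  calc S.ncard ≤ (insert s T).ncard := Set.ncard_le_ncard hST (hT.finite.insert s)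
    _ ≤ T.ncard + 1 := Set.ncard_insert_le s T
    _ ≤ 2 := by
      have := (Set.ncard_le_one_iff hT.finite).2 fun ha hb => hT ha hb
      omega
end

section
/- Let w be a word of length n such that the factor w[n/4..n/2] is aperiodic (its smallest period exceeds its half-length). Then all rightmost occurrences of distinct squares of length at most n in ww that start at a position i with 1 ≤ i ≤ n/4 correspond to squares of the same length. -/
/-! A square `uu` whose rightmost occurrence in `ww` starts at `i < n/4` must run past the end
of the first copy of `w` (otherwise it would reoccur `n` positions later), so
`2|u| ≥ n - i > 3n/4`. If two such squares had lengths `2|u| < 2|u'| ≤ n`, then for `j` in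
`w[n/4..n/2]`, which lies inside the first halves of both,
`ww[j] = ww[j + |u'|] = ww[j + d + |u|] = ww[j + d]` with `d = |u'| - |u|`. So `d ≤ n/8` is a
period of a factor of length about `n/4`, contradicting its aperiodicity. -/

section

variable {α : Type*}

lemma occursAt.getElem?_add {s x : List α} {i t : ℕ} (h : occursAt s x i)
    (ht : t < s.length) : x[i + t]? = s[t]? := by
  conv_rhs => rw [← h]
  rw [List.getElem?_take_of_lt ht, List.getElem?_drop]

lemma occursAt.getElem?_add_length_of_sq {u x : List α} {i j : ℕ} (h : occursAt (u ++ u) x i)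
    (hij : i ≤ j) (hj : j < i + u.length) : x[j]? = x[j + u.length]? := by
  obtain ⟨t, rfl⟩ := Nat.exists_eq_add_of_le hij
  rw [h.getElem?_add (by simp; omega), show i + t + u.length = i + (u.length + t) by omega,
    h.getElem?_add (by simp; omega), List.getElem?_append_left (by omega),
    List.getElem?_append_right (by omega), Nat.add_sub_cancel_left]

lemma getElem?_eq_add_of_occursAt_sq {x u v : List α} {i k j d : ℕ}
    (hu : occursAt (u ++ u) x i) (hv : occursAt (v ++ v) x k) (hd : u.length + d = v.length)
    (hkj : k ≤ j) (hjk : j < k + v.length) (hij : i ≤ j + d) (hji : j + d < i + u.length) :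
    x[j]? = x[j + d]? := by
  calc x[j]? = x[j + v.length]? := hv.getElem?_add_length_of_sq hkj hjk
    _ = x[j + d + u.length]? := by rw [← hd, Nat.add_comm u.length d, Nat.add_assoc]
    _ = x[j + d]? := (hu.getElem?_add_length_of_sq hij hji).symm

lemma occursAt_append_self_length_add {s w : List α} {i : ℕ} (h : occursAt s (w ++ w) i)
    (hi : i + s.length ≤ w.length) : occursAt s (w ++ w) (w.length + i) := by
  unfold occursAt at h ⊢
  rw [List.drop_append_of_le_length (by omega),
    List.take_append_of_le_length (by simp; omega)] at h
  rwa [List.drop_append, List.drop_eq_nil_of_le (by omega), List.nil_append,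
    Nat.add_sub_cancel_left]

lemma rightmostStartsAt.length_le_add {s w : List α} {i : ℕ}
    (h : rightmostStartsAt s (w ++ w) i) : w.length ≤ i + s.length := by
  by_contra! hi
  have := h.2 _ (occursAt_append_self_length_add h.1 hi.le)
  omega

lemma getElem?_oneSlice (w : List α) {q m t : ℕ} (ht : t < m - q + 1) :
    (oneSlice w q m)[t]? = w[q - 1 + t]? := by
  rw [oneSlice, List.getElem?_take_of_lt ht, List.getElem?_drop]

lemma length_oneSlice (w : List α) {q m : ℕ} (hq : 1 ≤ q) (hqm : q ≤ m) (hm : m ≤ w.length) :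
    (oneSlice w q m).length = m - q + 1 := by
  simp only [oneSlice, List.length_take, List.length_drop]
  omega

lemma Aperiodic.length_lt_two_mul {s : List α} (hs : Aperiodic s) {p : ℕ} (hp : IsPeriod s p) :
    s.length < 2 * p :=
  hs.trans_le (Nat.mul_le_mul_left 2 (Nat.sInf_le hp))

lemma length_le_of_rightmostStartsAt_sq {w u u' : List α} {i i' : ℕ}
    (hs : Aperiodic (oneSlice w (w.length / 4) (w.length / 2)))
    (hu : 2 * u.length ≤ w.length) (hu' : 2 * u'.length ≤ w.length)
    (hi : i < w.length / 4) (hi' : i' < w.length / 4)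
    (h : rightmostStartsAt (u ++ u) (w ++ w) i)
    (h' : rightmostStartsAt (u' ++ u') (w ++ w) i') :
    u'.length ≤ u.length := by
  by_contra! hlt
  have hwrap := h.length_le_add
  have hwrap' := h'.length_le_add
  simp only [List.length_append] at hwrap hwrap'
  have hlen := length_oneSlice w (q := w.length / 4) (m := w.length / 2) (by omega) (by omega)
    (by omega)
  have hper : IsPeriod (oneSlice w (w.length / 4) (w.length / 2)) (u'.length - u.length) := by
    refine ⟨by omega, fun t ht => ?_⟩
    rw [hlen] at ht
    have hww := getElem?_eq_add_of_occursAt_sq (j := w.length / 4 - 1 + t)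
      (d := u'.length - u.length) h.1 h'.1 (by omega) (by omega) (by omega) (by omega) (by omega)
    rw [List.getElem?_append_left (by omega), List.getElem?_append_left (by omega)] at hww
    rwa [getElem?_oneSlice w (by omega), getElem?_oneSlice w (by omega), ← Nat.add_assoc]
  have := hs.length_lt_two_mul hper
  omega

end

/-- If `w[n/4..n/2]` is aperiodic, then all rightmost occurrences in `ww` of distinct
squares of length at most `n` starting at one of the first `n/4` positions correspond
to squares of the same length. -/
theorem stmt10 {α : Type*} (w : List α) (n : ℕ) (hn : w.length = n)
    (hs : Aperiodic (oneSlice w (n / 4) (n / 2))) :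
    ∀ (u u' : List α) (i i' : ℕ), u ≠ [] → u' ≠ [] →
      (u ++ u).length ≤ n → (u' ++ u').length ≤ n →
      i < n / 4 → i' < n / 4 →
      rightmostStartsAt (u ++ u) (w ++ w) i →
      rightmostStartsAt (u' ++ u') (w ++ w) i' →
      u.length = u'.length := by
  subst hn
  intro u u' i i' _ _ hlen hlen' hi hi' h h'
  simp only [List.length_append] at hlen hlen'
  exact le_antisymm (length_le_of_rightmostStartsAt_sq hs (by omega) (by omega) hi' hi h' h)
    (length_le_of_rightmostStartsAt_sq hs (by omega) (by omega) hi hi' h h')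
end

section
/- Let Δ_1, …, Δ_6 be positive reals with Δ_1 + ⋯ + Δ_6 = n and n/8 < Δ_j < n/4 for all j, and suppose there is a function succ on Z/6Z with succ(i) ∈ {i+2, i+3} and succ(succ(i)) = i - 1 for all i. Then succ is not injective; in particular no such configuration with all six pairwise-distant occurrences can exist. -/
/-!
Since `succ ∘ succ` is the translation `i ↦ i - 1`, `succ` commutes with that translation,
so it is itself a translation `i ↦ i + c`. Then `2c = -1`, which is impossible modulo an even
number by parity; hence no such `succ` exists.
-/

namespace ZMod

variable {n : ℕ} {f : ZMod n → ZMod n}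

theorem apply_sub_one_of_apply_apply_eq_sub_one (hf : ∀ i, f (f i) = i - 1) (i : ZMod n) :
    f (i - 1) = f i - 1 := by
  rw [← hf i, hf (f i)]

theorem apply_add_one_of_apply_apply_eq_sub_one (hf : ∀ i, f (f i) = i - 1) (i : ZMod n) :
    f (i + 1) = f i + 1 := by
  have := apply_sub_one_of_apply_apply_eq_sub_one hf (i + 1)
  rw [add_sub_cancel_right] at this
  rw [this, sub_add_cancel]

theorem apply_eq_apply_zero_add_of_apply_apply_eq_sub_one (hf : ∀ i, f (f i) = i - 1)
    (i : ZMod n) : f i = f 0 + i := by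
  obtain ⟨k, rfl⟩ := intCast_surjective i
  induction k using Int.induction_on with
  | zero => simp
  | succ k ih =>
    push_cast at ih ⊢
    rw [apply_add_one_of_apply_apply_eq_sub_one hf, ih, add_assoc]
  | pred k ih =>
    push_cast at ih ⊢
    rw [apply_sub_one_of_apply_apply_eq_sub_one hf, ih, add_sub_assoc]

theorem add_self_ne_neg_one (hn : Even n) (c : ZMod n) : c + c ≠ -1 := by
  intro h
  have := congrArg (castHom (even_iff_two_dvd.mp hn) (ZMod 2)) h
  simp only [map_add, map_neg, map_one] at this
  generalize castHom _ (ZMod 2) c = d at this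
  revert d
  decide

theorem not_forall_apply_apply_eq_sub_one (hn : Even n) : ¬ ∀ i, f (f i) = i - 1 := by
  intro hf
  have h := hf 0
  rw [apply_eq_apply_zero_add_of_apply_apply_eq_sub_one hf, zero_sub] at h
  exact add_self_ne_neg_one hn (f 0) h

end ZMod

theorem stmt16_general
    (succ : ZMod 6 → ZMod 6)
    (hcyc : ∀ i, succ (succ i) = i - 1) :
    ¬ Function.Injective succ :=
  (ZMod.not_forall_apply_apply_eq_sub_one (by decide) hcyc).elim

/-- The `d = 6` case: no successor function on `Z/6Z` arising from six overlapping
occurrences can be injective. -/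
theorem stmt16 (n : ℝ) (Δ : Fin 6 → ℝ) (hpos : ∀ j, 0 < Δ j)
    (hsum : ∑ j, Δ j = n) (hlo : ∀ j, n / 8 < Δ j) (hhi : ∀ j, Δ j < n / 4)
    (succ : ZMod 6 → ZMod 6)
    (hsucc : ∀ i, succ i = i + 2 ∨ succ i = i + 3)
    (hcyc : ∀ i, succ (succ i) = i - 1) :
    ¬ Function.Injective succ :=
  stmt16_general succ hcyc
end

section
/- Let succ be a function on Z/7Z satisfying succ(i) ∈ {i+2, i+3} and succ(succ(i)) = i - 1 for every i. Then succ(i) = i + 3 for every i. -/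
theorem apply_eq_add_right_of_apply_apply_eq_add {G : Type*} [AddLeftCancelSemigroup G]
    {f : G → G} {a b c : G} (hf : ∀ i, f i = i + a ∨ f i = i + b) (hff : ∀ i, f (f i) = i + c)
    (haa : a + a ≠ c) (hab : a + b ≠ c) (i : G) : f i = i + b := by
  refine (hf i).resolve_left fun hi => ?_
  have htwo := hff i
  rw [hi] at htwo
  rcases hf (i + a) with h | h <;> rw [h, add_assoc] at htwo
  exacts [haa (add_left_cancel htwo), hab (add_left_cancel htwo)]

/-- The `d = 7` case: such a successor function on `Z/7Z` must be `i ↦ i + 3`. -/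
theorem stmt17 (succ : ZMod 7 → ZMod 7)
    (hsucc : ∀ i, succ i = i + 2 ∨ succ i = i + 3)
    (hcyc : ∀ i, succ (succ i) = i - 1) :
    ∀ i, succ i = i + 3 :=
  apply_eq_add_right_of_apply_apply_eq_add hsucc (fun i => (hcyc i).trans (sub_eq_add_neg i 1))
    (by decide) (by decide)
end

section
/- The number of distinct squares occurring in a circular word of length n is at most 3.75·n. -/
namespace WordSquares

variable {α : Type*}

def window (F : ℕ → α) (i m : ℕ) : List α := List.ofFn fun t : Fin m => F (i + t)

@[simp] lemma length_window (F : ℕ → α) (i m : ℕ) : (window F i m).length = m := by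
  simp [window]

@[simp] lemma getElem_window (F : ℕ → α) (i m t : ℕ) (ht : t < (window F i m).length) :
    (window F i m)[t] = F (i + t) := by
  simp [window]

lemma window_eq_window_iff {F : ℕ → α} {i j m : ℕ} :
    window F i m = window F j m ↔ ∀ t < m, F (i + t) = F (j + t) := by
  simp [window, List.ofFn_inj, funext_iff, Fin.forall_iff]

lemma window_comp_add_right (F : ℕ → α) (i k m : ℕ) :
    window (fun t => F (t + k)) i m = window F (i + k) m := by
  simp only [window, Nat.add_right_comm]

lemma window_eq_of_modEq {F : ℕ → α} {q i j : ℕ} (hF : F.Periodic q) (h : i ≡ j [MOD q])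
    (m : ℕ) : window F i m = window F j m :=
  window_eq_window_iff.2 fun t _ =>
    (hF.map_mod_nat _).symm.trans ((congrArg F (h.add_right t)).trans (hF.map_mod_nat _))

lemma exists_window_eq_of_infix {F : ℕ → α} {i m : ℕ} {s : List α} (h : s <:+: window F i m) :
    ∃ k, k + s.length ≤ m ∧ window F (i + k) s.length = s := by
  obtain ⟨a, b, hab⟩ := h
  have hlen := congrArg List.length hab
  simp only [List.length_append, length_window] at hlen
  refine ⟨a.length, by omega, List.ext_getElem (by simp) fun t h₁ h₂ => ?_⟩
  have := congrArg (·[a.length + t]?) hab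
  simp only [List.append_assoc, List.getElem?_append_right (Nat.le_add_right _ _),
    Nat.add_sub_cancel_left, List.getElem?_append_left h₂, List.getElem?_eq_getElem h₂] at this
  rw [List.getElem?_eq_getElem (by simp; omega), getElem_window, Option.some_inj] at this
  simp [this, Nat.add_assoc]

def HasPeriodOn (F : ℕ → α) (p a b : ℕ) : Prop :=
  ∀ t, a ≤ t → t + p < b → F t = F (t + p)

namespace HasPeriodOn

variable {F : ℕ → α} {a b c g p q : ℕ}

lemma mono {a' b' : ℕ} (h : HasPeriodOn F p a b) (ha : a ≤ a') (hb : b' ≤ b) :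
    HasPeriodOn F p a' b' :=
  fun t ht htb => h t (ha.trans ht) (htb.trans_le hb)

lemma sub (hp : HasPeriodOn F p a b) (hq : HasPeriodOn F q a b) (hpq : p ≤ q) :
    HasPeriodOn F (q - p) a (b - p) := by
  intro t ht htb
  rw [hq t ht (by omega), hp (t + (q - p)) (by omega) (by omega)]
  congr 1
  omega

lemma extend (hg : HasPeriodOn F g a c) (hp : HasPeriodOn F p a b) (hc : a + p + g ≤ c)
    (hb : b ≤ c + p) : HasPeriodOn F g a b := by
  intro t ht htb
  by_cases htc : t + g < c
  · exact hg t ht htc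
  · have e₁ := hp (t - p) (by omega) (by omega)
    have e₂ := hg (t - p) (by omega) (by omega)
    have e₃ := hp (t - p + g) (by omega) (by omega)
    rw [Nat.sub_add_cancel (by omega)] at e₁
    rw [show t - p + g + p = t + g by omega] at e₃
    rw [← e₁, e₂, e₃]

lemma of_dvd (h : HasPeriodOn F g a b) (hgp : g ∣ p) : HasPeriodOn F p a b := by
  obtain ⟨k, rfl⟩ := hgp
  induction k with
  | zero => intro t _ _; simp
  | succ k ih =>
    intro t ht htb
    rw [ih t ht (by nlinarith), h (t + g * k) (by omega) (by rw [Nat.mul_succ] at htb; omega)]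
    ring_nf

/-- The weak Fine–Wilf theorem. -/
theorem gcd (hp : HasPeriodOn F p a b) (hq : HasPeriodOn F q a b) (hb : a + p + q ≤ b) :
    HasPeriodOn F (p.gcd q) a b := by
  induction hn : p + q using Nat.strong_induction_on generalizing p q b with
  | _ n ih =>
  wlog hpq : p ≤ q generalizing p q
  · rw [Nat.gcd_comm]
    exact this hq hp (by omega) (by omega) (by omega)
  obtain rfl | hp₀ := Nat.eq_zero_or_pos p
  · simpa using hq
  obtain rfl | hpq := hpq.eq_or_lt
  · simpa using hp
  have hsub := ih q (by omega) (hp.mono le_rfl (Nat.sub_le b p)) (hp.sub hq hpq.le)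
    (by omega) (by omega)
  rw [Nat.gcd_sub_self_right hpq.le] at hsub
  have hgq : p.gcd q ≤ q - p := by
    rw [← Nat.gcd_sub_self_right hpq.le]
    exact Nat.le_of_dvd (by omega) (Nat.gcd_dvd_right _ _)
  exact hsub.extend hp (by omega) (by omega)

lemma window_eq (h : HasPeriodOn F p a b) {m : ℕ} (hm : a + p + m ≤ b) :
    window F (a + p) m = window F a m :=
  window_eq_window_iff.2 fun t ht => by
    rw [h (a + t) (by omega) (by omega)]
    ring_nf

end HasPeriodOn

lemma hasPeriodOn_sub_of_squares {F : ℕ → α} {j ℓ₁ ℓ₂ : ℕ}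
    (h₁ : HasPeriodOn F ℓ₁ j (j + 2 * ℓ₁)) (h₂ : HasPeriodOn F ℓ₂ j (j + 2 * ℓ₂))
    (h : ℓ₁ ≤ ℓ₂) : HasPeriodOn F (ℓ₂ - ℓ₁) j (j + ℓ₁) := by
  simpa [show j + 2 * ℓ₁ - ℓ₁ = j + ℓ₁ by omega] using h₁.sub (h₂.mono le_rfl (by omega)) h

lemma exists_hasPeriodOn_of_three_squares {F : ℕ → α} {j ℓ₁ ℓ₂ ℓ₃ : ℕ}
    (h₁₂ : ℓ₁ < ℓ₂) (h₂₃ : ℓ₂ < ℓ₃)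
    (h₁ : HasPeriodOn F ℓ₁ j (j + 2 * ℓ₁)) (h₂ : HasPeriodOn F ℓ₂ j (j + 2 * ℓ₂))
    (h₃ : HasPeriodOn F ℓ₃ j (j + 2 * ℓ₃)) :
    ∃ g, 0 < g ∧ 2 * ℓ₁ + g ≤ 2 * ℓ₃ ∧ HasPeriodOn F g j (j + 2 * ℓ₁ + g) := by
  by_cases hℓ : 2 * ℓ₁ ≤ ℓ₃
  · exact ⟨ℓ₃, by omega, by omega, h₃.mono le_rfl (by omega)⟩
  -- Both differences `ℓ₂ - ℓ₁` and `ℓ₃ - ℓ₂` are periods of the prefix of length `ℓ₁`,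
  -- so the smaller one, `g`, can be pushed through the periods `ℓ₁` and `ℓ₂`.
  have hp := hasPeriodOn_sub_of_squares h₁ h₂ h₁₂.le
  have hq := hasPeriodOn_sub_of_squares h₂ h₃ h₂₃.le
  set g := min (ℓ₂ - ℓ₁) (ℓ₃ - ℓ₂) with hg
  have hg₁ : HasPeriodOn F g j (j + ℓ₁ + g) := by
    rcases min_choice (ℓ₂ - ℓ₁) (ℓ₃ - ℓ₂) with h | h <;> rw [← hg] at h <;> rw [h]
    · exact hp.extend (hq.mono le_rfl (by omega)) (by omega) (by omega)
    · exact hq.mono le_rfl (by omega)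
  have hg₂ : HasPeriodOn F g j (j + 2 * ℓ₁) := hg₁.extend h₁ (by omega) (by omega)
  exact ⟨g, by omega, by omega, hg₂.extend (h₂.mono le_rfl (by omega)) (by omega) (by omega)⟩

def OccursIn (F : ℕ → α) (M : ℕ) (s : List α) (j : ℕ) : Prop :=
  j + s.length ≤ M ∧ window F j s.length = s

def IsLastOcc (F : ℕ → α) (M : ℕ) (s : List α) (j : ℕ) : Prop :=
  OccursIn F M s j ∧ ∀ j', OccursIn F M s j' → j' ≤ j

lemma OccursIn.hasPeriodOn {F : ℕ → α} {M j : ℕ} {u : List α} (h : OccursIn F M (u ++ u) j) :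
    HasPeriodOn F u.length j (j + 2 * u.length) := by
  intro t ht htb
  have hF : ∀ k (hk : k < (u ++ u).length), F (j + k) = (u ++ u)[k] := fun k hk =>
    (getElem_window F j _ k (by simpa using hk)).symm.trans (List.getElem_of_eq h.2 _)
  obtain ⟨k, rfl⟩ := Nat.exists_eq_add_of_le ht
  rw [hF k (by simp; omega), show j + k + u.length = j + (u.length + k) by ring,
    hF (u.length + k) (by simp; omega), List.getElem_append_left (by omega),
    List.getElem_append_right (by omega)]
  simp

lemma IsLastOcc.not_three_squares {F : ℕ → α} {M j : ℕ} {s₁ s₂ s₃ : List α}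
    (hs₁ : IsSq s₁) (hs₂ : IsSq s₂) (hs₃ : IsSq s₃)
    (h₁₂ : s₁.length < s₂.length) (h₂₃ : s₂.length < s₃.length)
    (h₁ : IsLastOcc F M s₁ j) (h₂ : OccursIn F M s₂ j) (h₃ : OccursIn F M s₃ j) : False := by
  obtain ⟨u₁, -, rfl⟩ := hs₁
  obtain ⟨u₂, -, rfl⟩ := hs₂
  obtain ⟨u₃, -, rfl⟩ := hs₃
  simp only [List.length_append] at h₁₂ h₂₃
  obtain ⟨g, hg, hgℓ, hper⟩ := exists_hasPeriodOn_of_three_squares (F := F) (j := j)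
    (by omega : u₁.length < u₂.length) (by omega) h₁.1.hasPeriodOn h₂.hasPeriodOn h₃.hasPeriodOn
  have hocc : OccursIn F M (u₁ ++ u₁) (j + g) := by
    refine ⟨?_, ?_⟩
    · have := h₃.1
      simp only [List.length_append] at this ⊢
      omega
    · rw [hper.window_eq (by simp; omega)]
      exact h₁.1.2
  have := h₁.2 _ hocc
  omega

open Classical in
noncomputable def lastOcc (F : ℕ → α) (M : ℕ) (s : List α) : ℕ :=
  Nat.findGreatest (OccursIn F M s) M

lemma isLastOcc_lastOcc {F : ℕ → α} {M : ℕ} {s : List α} {j : ℕ} (h : OccursIn F M s j) :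
    IsLastOcc F M s (lastOcc F M s) := by
  classical
  have hj : j ≤ M := le_trans (Nat.le_add_right _ _) h.1
  exact ⟨Nat.findGreatest_spec hj h, fun j' h' =>
    Nat.le_findGreatest (le_trans (Nat.le_add_right _ _) h'.1) h'⟩

theorem ncard_squares_add_le {F : ℕ → α} {M L : ℕ} {S : Set (List α)} (hLM : L < M)
    (hsq : ∀ s ∈ S, IsSq s) (hocc : ∀ s ∈ S, ∃ j, OccursIn F M s j)
    (hone : ∀ s ∈ S, ∀ s' ∈ S, ∀ j < L, IsLastOcc F M s j → OccursIn F M s' j →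
      s'.length ≤ s.length) :
    S.ncard + L ≤ 2 * (M - 1) := by
  classical
  have hlast : ∀ s ∈ S, IsLastOcc F M s (lastOcc F M s) := fun s hs =>
    (hocc s hs).elim fun _ => isLastOcc_lastOcc
  let IsLongest (s : List α) : Prop :=
    ∀ s' ∈ S, OccursIn F M s' (lastOcc F M s) → s'.length ≤ s.length
  let T : Finset (ℕ × Bool) :=
    (Finset.range (M - 1) ×ˢ Finset.univ) \ (Finset.range L ×ˢ {false})
  have hmaps : ∀ s ∈ S, (lastOcc F M s, decide (IsLongest s)) ∈ T := by
    intro s hs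
    obtain ⟨u, hu, rfl⟩ := hsq s hs
    have hM := (hlast _ hs).1.1
    have hu : 0 < u.length := List.length_pos_iff.2 hu
    simp only [List.length_append] at hM
    simp only [T, Finset.mem_sdiff, Finset.mem_product, Finset.mem_range, Finset.mem_univ,
      Finset.mem_singleton, decide_eq_false_iff_not, not_and, not_not, and_true]
    exact ⟨by omega, fun hL s' hs' h' => hone _ hs s' hs' _ hL (hlast _ hs) h'⟩
  have hinj : Set.InjOn (fun s => (lastOcc F M s, decide (IsLongest s))) S := by
    intro a ha b hb hab
    simp only [Prod.mk.injEq, decide_eq_decide] at hab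
    wlog hlen : a.length ≤ b.length generalizing a b
    · exact (this hb ha ⟨hab.1.symm, hab.2.symm⟩ (by omega)).symm
    obtain hlen | hlen := hlen.eq_or_lt
    · rw [← (hlast a ha).1.2, ← (hlast b hb).1.2, hab.1, hlen]
    by_cases ha' : IsLongest a
    · exact absurd (ha' b hb (hab.1 ▸ (hlast b hb).1)) (by omega)
    · obtain ⟨c, hc, hcb, hlen'⟩ : ∃ c ∈ S, OccursIn F M c (lastOcc F M b) ∧
          b.length < c.length := by
        simpa [IsLongest] using mt hab.2.2 ha'
      exact ((hlast a ha).not_three_squares (hsq a ha) (hsq b hb) (hsq c hc) hlen hlen'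
        (hab.1 ▸ (hlast b hb).1) (hab.1 ▸ hcb)).elim
  have hT : T.card = 2 * (M - 1) - L := by
    rw [Finset.card_sdiff_of_subset (Finset.product_subset_product
      (Finset.range_subset_range.2 (by omega)) (Finset.subset_univ _))]
    simp only [Finset.card_product, Finset.card_range, Finset.card_univ, Fintype.card_bool,
      Finset.card_singleton]
    omega
  have := Set.ncard_le_ncard_of_injOn _ hmaps hinj (Finset.finite_toSet T)
  rw [Set.ncard_coe_finset, hT] at this
  omega

theorem exists_periodic_of_forall_hasPeriodOn {F : ℕ → α} {L : ℕ}
    (h : ∀ j, ∃ p, 0 < p ∧ 2 * p < L ∧ HasPeriodOn F p j (j + L)) :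
    ∃ p, 0 < p ∧ 2 * p < L ∧ F.Periodic p := by
  obtain ⟨p, hp, hpL, h₀⟩ := h 0
  refine ⟨p, hp, hpL, fun t => ?_⟩
  induction t using Nat.strong_induction_on with
  | _ t ih =>
  by_cases ht : t + p < L
  · exact (h₀ t (Nat.zero_le _) (by simpa using ht)).symm
  -- On the window of length `L` ending at `t + p`, the period `p` holds up to `t` by induction,
  -- and the window has its own short period `r`.
  obtain ⟨r, hr, hrL, hj⟩ := h (t + p + 1 - L)
  have hpj : HasPeriodOn F p (t + p + 1 - L) (t + p) := fun s _ hs => (ih s (by omega)).symm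
  have hgp : p.gcd r ≤ p := Nat.le_of_dvd hp (Nat.gcd_dvd_left p r)
  have hg := (hpj.gcd (hj.mono le_rfl (by omega)) (by omega)).extend hj (by omega) (by omega)
  exact ((hg.of_dvd (Nat.gcd_dvd_left p r)) t (by omega) (by omega)).symm

lemma exists_lt_window_comp_add_eq {F : ℕ → α} {n : ℕ} (hF : F.Periodic n) (hn : 0 < n)
    (i j m : ℕ) : ∃ j' < n, window (fun t => F (t + i)) j' m = window F j m := by
  refine ⟨(j + (n - 1) * i) % n, Nat.mod_lt _ hn, ?_⟩
  rw [window_comp_add_right]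
  refine window_eq_of_modEq hF ?_ m
  have hni : j + (n - 1) * i + i = j + i * n := by
    rw [add_assoc, ← Nat.succ_mul, Nat.succ_eq_add_one, Nat.sub_add_cancel hn, mul_comm]
  calc (j + (n - 1) * i) % n + i ≡ j + (n - 1) * i + i [MOD n] := (Nat.mod_modEq _ n).add_right i
    _ = j + i * n := hni
    _ ≡ j [MOD n] := by simp [Nat.ModEq]

def circ (w : List α) (hw : w ≠ []) (t : ℕ) : α :=
  w[t % w.length]'(Nat.mod_lt _ (List.length_pos_iff.2 hw))

section Circular

variable {w : List α} (hw : w ≠ [])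

lemma periodic_circ : (circ w hw).Periodic w.length := fun t => by
  simp [circ]

lemma rot_eq_window {i : ℕ} (hi : i ≤ w.length) : rot w i = window (circ w hw) i w.length := by
  rw [rot, ← List.rotate_eq_drop_append_take hi]
  refine List.ext_getElem (by simp) fun t _ _ => ?_
  simp [List.getElem_rotate, circ, Nat.add_comm]

lemma exists_window_eq_of_mem_cyclicSquares {s : List α} (hs : s ∈ cyclicSquares w) :
    IsSq s ∧ s.length ≤ w.length ∧ ∃ j, window (circ w hw) j s.length = s := by
  obtain ⟨hsq, i, hi, hinf⟩ := hs
  rw [rot_eq_window hw hi.le] at hinf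
  obtain ⟨k, hk, hwin⟩ := exists_window_eq_of_infix hinf
  exact ⟨hsq, by omega, _, hwin⟩

end Circular

section

variable {F : ℕ → α} {n : ℕ} {S : Set (List α)}

theorem ncard_squares_le_of_periodic {q : ℕ} (hF : F.Periodic q) (hq : 0 < q)
    (hS : ∀ s ∈ S, IsSq s ∧ s.length ≤ n ∧ ∃ j, window F j s.length = s) :
    S.ncard ≤ 2 * (n + q - 1) := by
  have hocc : ∀ s ∈ S, ∃ j, OccursIn F (n + q) s j := by
    intro s hs
    obtain ⟨-, hsn, j, hj⟩ := hS s hs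
    exact ⟨j % q, by have := Nat.mod_lt j hq; omega,
      (window_eq_of_modEq hF (Nat.mod_modEq j q) _).trans hj⟩
  simpa using
    ncard_squares_add_le (L := 0) (by omega) (fun s hs => (hS s hs).1) hocc (by simp)

theorem ncard_squares_add_le_of_not_hasPeriodOn {L j₀ : ℕ} (hF : F.Periodic n) (hn : 0 < n)
    (hL : 4 * L ≤ n) (hS : ∀ s ∈ S, IsSq s ∧ s.length ≤ n ∧ ∃ j, window F j s.length = s)
    (hj₀ : ∀ p, 0 < p → 2 * p < L → ¬HasPeriodOn F p j₀ (j₀ + L)) :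
    S.ncard + L ≤ 2 * (2 * n - 1) := by
  -- Shift `F` so that the window without short period occupies `[L, 2L)`.
  set G : ℕ → α := fun t => F (t + (j₀ + n - L))
  have hG : G.Periodic n := hF.add_const _
  have hGF : ∀ p, HasPeriodOn G p L (2 * L) → HasPeriodOn F p j₀ (j₀ + L) := by
    intro p h t ht htp
    have := h (t + L - j₀) (by omega) (by omega)
    simpa only [G, show t + L - j₀ + (j₀ + n - L) = t + n by omega,
      show t + L - j₀ + p + (j₀ + n - L) = t + p + n by omega, hF _] using this
  refine ncard_squares_add_le (F := G) (M := 2 * n) (by omega) (fun s hs => (hS s hs).1)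
    ?_ ?_
  · intro s hs
    obtain ⟨-, hsn, j, hj⟩ := hS s hs
    obtain ⟨j', hj', hwin⟩ := exists_lt_window_comp_add_eq hF hn (j₀ + n - L) j s.length
    exact ⟨j', by omega, hwin.trans hj⟩
  · intro s hs s' hs' j hj hlast hocc'
    obtain ⟨u, -, rfl⟩ := (hS s hs).1
    obtain ⟨v, -, rfl⟩ := (hS s' hs').1
    have hv := (hS _ hs').2.1
    simp only [List.length_append] at hv ⊢
    by_contra! huv
    have hlong : n < j + 2 * u.length := by
      by_contra! hshort
      have hocc : OccursIn G (2 * n) (u ++ u) (j + n) :=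
        ⟨by simp only [List.length_append]; omega,
          (window_eq_of_modEq hG (Nat.add_modEq_right) _).trans hlast.1.2⟩
      have := hlast.2 _ hocc
      omega
    have hp := hasPeriodOn_sub_of_squares hlast.1.hasPeriodOn hocc'.hasPeriodOn (by omega)
    exact hj₀ _ (by omega) (by omega) (hGF _ (hp.mono (by omega) (by omega)))

end

end WordSquares

open WordSquares in
/-- A circular word of length `n` contains at most `3.75n` distinct squares. -/
theorem stmt18 {α : Type*} (w : List α) :
    4 * (cyclicSquares w).ncard ≤ 15 * w.length := by
  rcases eq_or_ne w [] with rfl | hw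
  · simp [cyclicSquares]
  have hS := fun s (hs : s ∈ cyclicSquares w) => exists_window_eq_of_mem_cyclicSquares hw hs
  have hn : 0 < w.length := List.length_pos_iff.2 hw
  by_cases hwin : ∀ j, ∃ p, 0 < p ∧ 2 * p < w.length / 4 ∧
      HasPeriodOn (circ w hw) p j (j + w.length / 4)
  · obtain ⟨q, hq, hqn, hFq⟩ := exists_periodic_of_forall_hasPeriodOn hwin
    have := ncard_squares_le_of_periodic hFq hq hS
    omega
  · push Not at hwin
    obtain ⟨j₀, hj₀⟩ := hwin
    have := ncard_squares_add_le_of_not_hasPeriodOn (periodic_circ hw) hn (by omega) hS hj₀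
    omega
end
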